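/- arXiv:1312.2903 — 7 statements merged into one kernel-verified Lean document; each statement's English description precedes it below -/
import Mathlib

section
/- Let D be a square-integrable real random variable with E[D] = 0, and let ξ > 0. Then E[exp(ξD − (ξ²/2)(D² + E[D²]))] ≤ 1. -/
/-!
Let `ψ a = exp (a - a² / 2)` and let `D'` be an independent copy of `D`. Since `E[D'] = 0`,
for fixed `d` the mean of `ξ (d - D') - ξ² (d - D')² / 2` is `ξ d - ξ² (d² + E[D²]) / 2`, so
Jensen's inequality bounds the integrand at `D = d` by `E[ψ (ξ (d - D'))]`. Integrating over `d`,
the left-hand side is at most `E[ψ (ξ (D - D'))]`. As `D - D'` is symmetric, this equals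
`E[(ψ a + ψ (-a)) / 2] = E[cosh a · exp (-a² / 2)]` with `a = ξ (D - D')`, and
`cosh a ≤ exp (a² / 2)` makes it at most `1`.
-/

open MeasureTheory Real

noncomputable def expSubHalfSq (a : ℝ) : ℝ := exp (a - a ^ 2 / 2)

@[fun_prop]
lemma continuous_expSubHalfSq : Continuous expSubHalfSq := by
  unfold expSubHalfSq
  fun_prop

lemma expSubHalfSq_pos (a : ℝ) : 0 < expSubHalfSq a := exp_pos _

lemma expSubHalfSq_le (a : ℝ) : expSubHalfSq a ≤ exp (1 / 2) :=
  exp_le_exp.2 (by nlinarith [sq_nonneg (a - 1)])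

lemma expSubHalfSq_add_expSubHalfSq_neg_le_two (a : ℝ) :
    expSubHalfSq a + expSubHalfSq (-a) ≤ 2 := by
  have hsum : expSubHalfSq a + expSubHalfSq (-a) = 2 * cosh a * exp (-(a ^ 2 / 2)) := by
    simp only [expSubHalfSq, cosh_eq, neg_sq, sub_eq_add_neg, exp_add]
    ring
  calc expSubHalfSq a + expSubHalfSq (-a) = 2 * cosh a * exp (-(a ^ 2 / 2)) := hsum
    _ ≤ 2 * exp (a ^ 2 / 2) * exp (-(a ^ 2 / 2)) := by
      gcongr
      exact cosh_le_exp_half_sq a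
    _ = 2 := by rw [mul_assoc, ← exp_add, add_neg_cancel, exp_zero, mul_one]

section Integrals

variable {α : Type*} [MeasurableSpace α] {μ : Measure α}

lemma integrable_expSubHalfSq_comp [IsFiniteMeasure μ] {f : α → ℝ}
    (hf : AEStronglyMeasurable f μ) : Integrable (fun x => expSubHalfSq (f x)) μ :=
  Integrable.of_bound (continuous_expSubHalfSq.comp_aestronglyMeasurable hf) (exp (1 / 2))
    (ae_of_all _ fun _ => (norm_of_nonneg (expSubHalfSq_pos _).le).trans_le (expSubHalfSq_le _))

lemma exp_integral_le_integral_exp [IsProbabilityMeasure μ] {f : α → ℝ} (hf : Integrable f μ)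
    (hexp : Integrable (fun x => exp (f x)) μ) : exp (∫ x, f x ∂μ) ≤ ∫ x, exp (f x) ∂μ :=
  convexOn_exp.map_integral_le continuous_exp.continuousOn isClosed_univ
    (ae_of_all _ fun x => Set.mem_univ (f x)) hf hexp

lemma integral_quadratic [IsProbabilityMeasure μ] {X : α → ℝ} (hX : MemLp X 2 μ) (a b c : ℝ) :
    ∫ x, (a + b * X x + c * X x ^ 2) ∂μ = a + b * ∫ x, X x ∂μ + c * ∫ x, X x ^ 2 ∂μ := by
  have hX1 : Integrable X μ := hX.integrable one_le_two
  rw [integral_add, integral_add, integral_const, integral_const_mul, integral_const_mul,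
    probReal_univ, one_smul]
  exacts [integrable_const a, hX1.const_mul b, (integrable_const a).add (hX1.const_mul b),
    hX.integrable_sq.const_mul c]

lemma integral_prod_self_le_of_add_swap_le [IsProbabilityMeasure μ] {F : α × α → ℝ}
    (hF : Integrable F (μ.prod μ)) {c : ℝ} (h : ∀ z, F z + F z.swap ≤ 2 * c) :
    ∫ z, F z ∂(μ.prod μ) ≤ c := by
  have hsum : ∫ z, (F z + F z.swap) ∂(μ.prod μ) ≤ 2 * c := by
    simpa using integral_mono (hF.add hF.swap) (integrable_const (2 * c)) h
  rw [integral_add hF (hF.swap : Integrable (fun z => F z.swap) _), integral_prod_swap F] at hsum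
  linarith

lemma exp_le_integral_expSubHalfSq [IsProbabilityMeasure μ] {X : α → ℝ} (hX : MemLp X 2 μ)
    (hX0 : ∫ x, X x ∂μ = 0) (ξ d : ℝ) :
    exp (ξ * d - ξ ^ 2 / 2 * (d ^ 2 + ∫ x, X x ^ 2 ∂μ)) ≤
      ∫ x, expSubHalfSq (ξ * (d - X x)) ∂μ := by
  have hquad : ∀ x, ξ * (d - X x) - (ξ * (d - X x)) ^ 2 / 2 =
      (ξ * d - ξ ^ 2 / 2 * d ^ 2) + (ξ ^ 2 * d - ξ) * X x + -(ξ ^ 2 / 2) * X x ^ 2 :=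
    fun x => by ring
  have hmean : ∫ x, (ξ * (d - X x) - (ξ * (d - X x)) ^ 2 / 2) ∂μ =
      ξ * d - ξ ^ 2 / 2 * (d ^ 2 + ∫ x, X x ^ 2 ∂μ) := by
    simp_rw [hquad]
    rw [integral_quadratic hX, hX0]
    ring
  have hint : Integrable (fun x => ξ * (d - X x) - (ξ * (d - X x)) ^ 2 / 2) μ := by
    simp_rw [hquad]
    exact ((integrable_const _).add ((hX.integrable one_le_two).const_mul _)).add
      (hX.integrable_sq.const_mul _)
  rw [← hmean]
  exact exp_integral_le_integral_exp hint <| integrable_expSubHalfSq_comp <|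
    (aestronglyMeasurable_const.sub hX.aestronglyMeasurable).const_mul ξ

end Integrals

theorem exp_moment_centered_le_one_general {Ω : Type*} [MeasurableSpace Ω]
    (μ : Measure Ω) [IsProbabilityMeasure μ] (D : Ω → ℝ)
    (hD2 : MemLp D 2 μ) (hDmean : ∫ ω, D ω ∂μ = 0) (ξ : ℝ) :
    ∫ ω, Real.exp (ξ * D ω - ξ ^ 2 / 2 * ((D ω) ^ 2 + ∫ ω', (D ω') ^ 2 ∂μ)) ∂μ ≤ 1 := by
  set F : Ω × Ω → ℝ := fun z => expSubHalfSq (ξ * (D z.1 - D z.2))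
  have hD := hD2.aestronglyMeasurable
  have hF : Integrable F (μ.prod μ) :=
    integrable_expSubHalfSq_comp ((hD.comp_fst.sub hD.comp_snd).const_mul ξ)
  calc ∫ ω, exp (ξ * D ω - ξ ^ 2 / 2 * (D ω ^ 2 + ∫ ω', D ω' ^ 2 ∂μ)) ∂μ
      ≤ ∫ ω, ∫ ω', F (ω, ω') ∂μ ∂μ :=
        integral_mono_of_nonneg (ae_of_all _ fun _ => (exp_pos _).le) hF.integral_prod_left
          (ae_of_all _ fun ω => exp_le_integral_expSubHalfSq hD2 hDmean ξ (D ω))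
    _ = ∫ z, F z ∂(μ.prod μ) := integral_integral hF
    _ ≤ 1 := integral_prod_self_le_of_add_swap_le hF fun z => by
        have hswap : ξ * (D z.2 - D z.1) = -(ξ * (D z.1 - D z.2)) := by ring
        simpa [F, hswap] using expSubHalfSq_add_expSubHalfSq_neg_le_two (ξ * (D z.1 - D z.2))

/-- For a centered square-integrable random variable `D` and `ξ > 0`,
`E[exp(ξ D - (ξ²/2)(D² + E[D²]))] ≤ 1`. -/
theorem exp_moment_centered_le_one {Ω : Type*} [MeasurableSpace Ω]
    (μ : Measure Ω) [IsProbabilityMeasure μ] (D : Ω → ℝ)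
    (hD2 : MemLp D 2 μ) (hDmean : ∫ ω, D ω ∂μ = 0) (ξ : ℝ) (hξ : 0 < ξ) :
    ∫ ω, Real.exp (ξ * D ω - ξ ^ 2 / 2 * ((D ω) ^ 2 + ∫ ω', (D ω') ^ 2 ∂μ)) ∂μ ≤ 1 :=
  exp_moment_centered_le_one_general μ D hD2 hDmean ξ
end

section
/- Let (Nᵢ)_{i=0}^n be a square-integrable martingale with N₀ = 0 relative to a filtration (𝒢ᵢ). Define W₀ = 0 and Wᵢ = Σ_{j=1}^i ( E[(N_j − N_{j−1})² | 𝒢_{j−1}] + (N_j − N_{j−1})² ). Then for every ξ > 0 and t ≥ 0, P( ∃ 1 ≤ i ≤ n : Nᵢ > (ξ/2)Wᵢ + t/ξ ) ≤ e^{−t}. -/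
/-!
For every `ξ` the process `Uᵢ = exp (ξ Nᵢ - ξ² Wᵢ / 2)` is a supermartingale. Writing
`u = ξ (Nᵢ₊₁ - Nᵢ)` and `Vᵢ = E[(Nᵢ₊₁ - Nᵢ)² | 𝒢ᵢ]`, one has
`Uᵢ₊₁ = Uᵢ · exp (-ξ² Vᵢ / 2) · exp (u - u² / 2)`, and the elementary bound
`exp (u - u² / 2) ≤ 1 + u + u² / 2` has conditional expectation `1 + ξ² Vᵢ / 2 ≤ exp (ξ² Vᵢ / 2)`
because the linear term is a martingale increment. The bound `u - u² / 2 ≤ 1 / 2` keeps every `Uᵢ`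
integrable. On the event of the theorem some `Uᵢ` with `i ≤ n` reaches `eᵗ`; optional stopping at
the first such time and Markov's inequality bound its probability by `E[U₀] e⁻ᵗ = e⁻ᵗ`.
-/

open MeasureTheory

namespace Real

-- `(1 + x + x² / 2) exp (x² / 2 - x)` is minimal at `0`: its derivative has the sign of `x`.
theorem exp_sub_sq_div_two_le (u : ℝ) : exp (u - u ^ 2 / 2) ≤ 1 + u + u ^ 2 / 2 := by
  set F : ℝ → ℝ := fun x => (1 + x + x ^ 2 / 2) * exp (x ^ 2 / 2 - x)
  have hF : ∀ x, HasDerivAt F (x * ((1 + x / 2 + x ^ 2 / 2) * exp (x ^ 2 / 2 - x))) x := by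
    intro x
    have h₁ := ((hasDerivAt_id x).const_add 1).add ((hasDerivAt_pow 2 x).div_const 2)
    have h₂ := (((hasDerivAt_pow 2 x).div_const 2).sub (hasDerivAt_id x)).exp
    exact (h₁.mul h₂).congr_deriv (by simp only [id, Pi.sub_apply, Pi.add_apply]; ring)
  have hpos : ∀ x : ℝ, 0 < (1 + x / 2 + x ^ 2 / 2) * exp (x ^ 2 / 2 - x) := fun x =>
    mul_pos (by nlinarith [sq_nonneg (x + 1 / 2)]) (exp_pos _)
  have hmin : IsMinOn F Set.univ 0 :=
    isMinOn_univ_of_deriv (hF 0).continuousAt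
      (fun x _ => (hF x).differentiableAt.differentiableWithinAt)
      (fun x _ => (hF x).differentiableAt.differentiableWithinAt)
      (fun x hx => (hF x).deriv ▸ mul_nonpos_of_nonpos_of_nonneg (le_of_lt hx) (hpos x).le)
      (fun x hx => (hF x).deriv ▸ mul_nonneg (le_of_lt hx) (hpos x).le)
  have h₁ : 1 ≤ F u := by simpa [F] using hmin (Set.mem_univ u)
  calc exp (u - u ^ 2 / 2) ≤ exp (u - u ^ 2 / 2) * F u :=
        le_mul_of_one_le_right (exp_pos _).le h₁
    _ = 1 + u + u ^ 2 / 2 := by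
      rw [mul_left_comm, ← exp_add, show u - u ^ 2 / 2 + (u ^ 2 / 2 - u) = 0 by ring, exp_zero,
        mul_one]

end Real

namespace MeasureTheory

variable {Ω : Type*} {m0 : MeasurableSpace Ω} {μ : Measure Ω}

theorem integrable_exp_mul_sub_sq [IsFiniteMeasure μ] {X : Ω → ℝ} (hX : AEStronglyMeasurable X μ)
    (ξ : ℝ) : Integrable (fun ω => Real.exp (ξ * X ω - ξ ^ 2 / 2 * X ω ^ 2)) μ := by
  refine (integrable_const (Real.exp (1 / 2))).mono' ?_ (ae_of_all _ fun ω => ?_)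
  · exact Real.continuous_exp.comp_aestronglyMeasurable
      ((hX.const_mul ξ).sub ((hX.pow 2).const_mul _))
  · rw [Real.norm_of_nonneg (Real.exp_pos _).le]
    exact Real.exp_le_exp.2 (by nlinarith [sq_nonneg (ξ * X ω - 1)])

theorem condExp_exp_mul_sub_sq_le [IsFiniteMeasure μ] {m : MeasurableSpace Ω} (hm : m ≤ m0)
    {X : Ω → ℝ} (hX : MemLp X 2 μ) (hX0 : μ[X|m] =ᵐ[μ] 0) (ξ : ℝ) :
    μ[fun ω => Real.exp (ξ * X ω - ξ ^ 2 / 2 * X ω ^ 2)|m]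
      ≤ᵐ[μ] fun ω => Real.exp (ξ ^ 2 / 2 * μ[fun ω => X ω ^ 2|m] ω) := by
  have hX1 : Integrable X μ := hX.integrable one_le_two
  have hX2 : Integrable (fun ω => X ω ^ 2) μ := hX.integrable_sq
  have hexp := integrable_exp_mul_sub_sq (μ := μ) hX.1 ξ
  -- `P = 1 + ξ X + ξ² X² / 2`, written with `•` so that `condExp_add` and `condExp_smul` apply
  set P : Ω → ℝ := (fun _ => 1) + (ξ • X + (ξ ^ 2 / 2) • fun ω => X ω ^ 2)
  have hP : Integrable P μ := (integrable_const 1).add ((hX1.smul ξ).add (hX2.smul _))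
  have hle : μ[fun ω => Real.exp (ξ * X ω - ξ ^ 2 / 2 * X ω ^ 2)|m] ≤ᵐ[μ] μ[P|m] := by
    refine condExp_mono hexp hP (ae_of_all _ fun ω => ?_)
    have h := Real.exp_sub_sq_div_two_le (ξ * X ω)
    simp only [P, Pi.add_apply, Pi.smul_apply, smul_eq_mul]
    rw [show ξ * X ω - ξ ^ 2 / 2 * X ω ^ 2 = ξ * X ω - (ξ * X ω) ^ 2 / 2 by ring]
    linarith
  have hcondP : μ[P|m] =ᵐ[μ] fun ω => 1 + ξ ^ 2 / 2 * μ[fun ω => X ω ^ 2|m] ω := by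
    have h₁ := condExp_add (integrable_const (1 : ℝ)) ((hX1.smul ξ).add (hX2.smul (ξ ^ 2 / 2))) m
    have h₂ := condExp_add (hX1.smul ξ) (hX2.smul (ξ ^ 2 / 2)) m
    filter_upwards [h₁, h₂, condExp_smul ξ X m, condExp_smul (ξ ^ 2 / 2) (fun ω => X ω ^ 2) m,
      hX0] with ω h₁ h₂ h₃ h₄ h₀
    simp_all [P, condExp_const hm]
  filter_upwards [hle, hcondP] with ω hle hcondP
  exact (hle.trans_eq hcondP).trans ((add_comm _ _).trans_le (Real.add_one_le_exp _))

variable {𝒢 : Filtration ℕ m0}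

theorem Martingale.condExp_sub_ae_eq_zero {E : Type*} [NormedAddCommGroup E] [NormedSpace ℝ E]
    [CompleteSpace E] {f : ℕ → Ω → E} (hf : Martingale f 𝒢 μ) {i j : ℕ} (hij : i ≤ j) :
    μ[f j - f i|𝒢 i] =ᵐ[μ] 0 := by
  filter_upwards [condExp_sub (hf.integrable j) (hf.integrable i) (𝒢 i), hf.condExp_ae_eq hij,
    hf.condExp_ae_eq le_rfl] with ω h₁ h₂ h₃
  rw [h₁, Pi.sub_apply, h₂, h₃, sub_self]
  rfl

variable {N : ℕ → Ω → ℝ}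

/-- The paper's `Wᵢ`: the predictable plus the optional quadratic variation of `N`. -/
noncomputable def freedmanVariation (μ : Measure Ω) (𝒢 : Filtration ℕ m0) (N : ℕ → Ω → ℝ)
    (i : ℕ) (ω : Ω) : ℝ :=
  ∑ j ∈ Finset.range i,
    (μ[fun ω' => (N (j + 1) ω' - N j ω') ^ 2|𝒢 j] ω + (N (j + 1) ω - N j ω) ^ 2)

theorem freedmanVariation_zero : freedmanVariation μ 𝒢 N 0 = 0 := by
  ext ω; simp [freedmanVariation]

theorem freedmanVariation_succ (i : ℕ) (ω : Ω) :
    freedmanVariation μ 𝒢 N (i + 1) ω = freedmanVariation μ 𝒢 N i ω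
      + μ[fun ω' => (N (i + 1) ω' - N i ω') ^ 2|𝒢 i] ω + (N (i + 1) ω - N i ω) ^ 2 := by
  rw [freedmanVariation, Finset.sum_range_succ, add_assoc]; rfl

theorem freedmanVariation_eq_sum_Icc (i : ℕ) (ω : Ω) :
    freedmanVariation μ 𝒢 N i ω = ∑ j ∈ Finset.Icc 1 i,
      (μ[fun ω' => (N j ω' - N (j - 1) ω') ^ 2|𝒢 (j - 1)] ω + (N j ω - N (j - 1) ω) ^ 2) := by
  induction i with
  | zero => simp [freedmanVariation_zero]
  | succ i ih =>
    rw [freedmanVariation_succ, ih, Finset.sum_Icc_succ_top (by omega), add_assoc]; rfl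

theorem stronglyAdapted_freedmanVariation (hN : StronglyAdapted 𝒢 N) :
    StronglyAdapted 𝒢 (freedmanVariation μ 𝒢 N) := fun i =>
  Finset.stronglyMeasurable_fun_sum _ fun j hj =>
    have hji : j + 1 ≤ i := Finset.mem_range.1 hj
    (stronglyMeasurable_condExp.mono (𝒢.mono (by omega))).add
      ((((hN (j + 1)).mono (𝒢.mono hji)).sub ((hN j).mono (𝒢.mono (by omega)))).pow 2)

noncomputable def freedmanExp (μ : Measure Ω) (𝒢 : Filtration ℕ m0) (N : ℕ → Ω → ℝ) (ξ : ℝ)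
    (i : ℕ) (ω : Ω) : ℝ :=
  Real.exp (ξ * N i ω - ξ ^ 2 / 2 * freedmanVariation μ 𝒢 N i ω)

variable {ξ : ℝ}

theorem freedmanExp_zero (hN0 : N 0 = 0) : freedmanExp μ 𝒢 N ξ 0 = 1 := by
  ext ω; simp [freedmanExp, freedmanVariation_zero, hN0]

theorem freedmanExp_pos (i : ℕ) (ω : Ω) : 0 < freedmanExp μ 𝒢 N ξ i ω :=
  Real.exp_pos _

theorem freedmanExp_succ (i : ℕ) (ω : Ω) :
    freedmanExp μ 𝒢 N ξ (i + 1) ω = freedmanExp μ 𝒢 N ξ i ω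
      * Real.exp (-(ξ ^ 2 / 2 * μ[fun ω' => (N (i + 1) ω' - N i ω') ^ 2|𝒢 i] ω))
      * Real.exp (ξ * (N (i + 1) ω - N i ω) - ξ ^ 2 / 2 * (N (i + 1) ω - N i ω) ^ 2) := by
  simp only [freedmanExp, freedmanVariation_succ, ← Real.exp_add]
  congr 1
  ring

theorem stronglyAdapted_freedmanExp (hN : StronglyAdapted 𝒢 N) :
    StronglyAdapted 𝒢 (freedmanExp μ 𝒢 N ξ) := fun i =>
  Real.continuous_exp.comp_stronglyMeasurable
    (((hN i).const_mul ξ).sub ((stronglyAdapted_freedmanVariation hN i).const_mul _))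

theorem ae_freedmanExp_le (hN0 : N 0 = 0) (i : ℕ) :
    ∀ᵐ ω ∂μ, freedmanExp μ 𝒢 N ξ i ω ≤ Real.exp (i / 2) := by
  induction i with
  | zero => simp [freedmanExp_zero hN0]
  | succ i ih =>
    have hV := condExp_nonneg (μ := μ) (m := 𝒢 i)
      (f := fun ω => (N (i + 1) ω - N i ω) ^ 2) (ae_of_all _ fun ω => sq_nonneg _)
    filter_upwards [ih, hV] with ω ih hV
    rw [freedmanExp_succ]
    calc _ ≤ Real.exp (i / 2) * 1 * Real.exp (1 / 2) := by
          gcongr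
          · simp only [Pi.zero_apply] at hV
            exact Real.exp_le_one_iff.2 (by nlinarith [sq_nonneg ξ])
          · nlinarith [sq_nonneg (ξ * (N (i + 1) ω - N i ω) - 1)]
      _ = Real.exp ((i + 1 : ℕ) / 2) := by
          rw [mul_one, ← Real.exp_add]; push_cast; congr 1; ring

theorem integrable_freedmanExp [IsFiniteMeasure μ] (hN : StronglyAdapted 𝒢 N) (hN0 : N 0 = 0)
    (i : ℕ) : Integrable (freedmanExp μ 𝒢 N ξ i) μ := by
  refine (integrable_const (Real.exp (i / 2))).mono'
    ((stronglyAdapted_freedmanExp hN i).mono (𝒢.le i)).aestronglyMeasurable ?_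
  filter_upwards [ae_freedmanExp_le hN0 i] with ω hω
  rwa [Real.norm_of_nonneg (freedmanExp_pos i ω).le]

theorem condExp_freedmanExp_succ_le [IsFiniteMeasure μ] (hN : Martingale N 𝒢 μ) (hN0 : N 0 = 0)
    (hL2 : ∀ i, MemLp (N i) 2 μ) (i : ℕ) :
    μ[freedmanExp μ 𝒢 N ξ (i + 1)|𝒢 i] ≤ᵐ[μ] freedmanExp μ 𝒢 N ξ i := by
  set V := μ[fun ω' => (N (i + 1) ω' - N i ω') ^ 2|𝒢 i]
  set A : Ω → ℝ := fun ω => freedmanExp μ 𝒢 N ξ i ω * Real.exp (-(ξ ^ 2 / 2 * V ω))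
  set G : Ω → ℝ := fun ω =>
    Real.exp (ξ * (N (i + 1) ω - N i ω) - ξ ^ 2 / 2 * (N (i + 1) ω - N i ω) ^ 2)
  have hsplit : freedmanExp μ 𝒢 N ξ (i + 1) = A * G := funext (freedmanExp_succ i)
  have hA : StronglyMeasurable[𝒢 i] A :=
    (stronglyAdapted_freedmanExp hN.stronglyAdapted i).mul
      (Real.continuous_exp.comp_stronglyMeasurable (stronglyMeasurable_condExp.const_mul _).neg)
  have hΔ : MemLp (fun ω => N (i + 1) ω - N i ω) 2 μ := (hL2 (i + 1)).sub (hL2 i)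
  have hpull := condExp_mul_of_stronglyMeasurable_left (g := G) hA
    (hsplit ▸ integrable_freedmanExp hN.stronglyAdapted hN0 (i + 1))
    (integrable_exp_mul_sub_sq hΔ.1 ξ)
  filter_upwards [hpull, condExp_exp_mul_sub_sq_le (𝒢.le i) hΔ
    (hN.condExp_sub_ae_eq_zero i.le_succ) ξ] with ω hpull hG
  rw [hsplit, hpull, Pi.mul_apply]
  calc A ω * μ[G|𝒢 i] ω ≤ A ω * Real.exp (ξ ^ 2 / 2 * V ω) :=
        mul_le_mul_of_nonneg_left hG (mul_pos (freedmanExp_pos i ω) (Real.exp_pos _)).le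
    _ = freedmanExp μ 𝒢 N ξ i ω := by
        rw [mul_assoc, ← Real.exp_add, neg_add_cancel, Real.exp_zero, mul_one]

theorem exp_le_freedmanExp (hξ : 0 < ξ) {t : ℝ} {i : ℕ} {ω : Ω}
    (h : ξ / 2 * freedmanVariation μ 𝒢 N i ω + t / ξ < N i ω) :
    Real.exp t ≤ freedmanExp μ 𝒢 N ξ i ω := by
  refine Real.exp_le_exp.2 ?_
  have h' := mul_lt_mul_of_pos_left h hξ
  rw [mul_add, mul_div_cancel₀ t hξ.ne'] at h'
  linarith

theorem Martingale.supermartingale_freedmanExp [IsFiniteMeasure μ] (hN : Martingale N 𝒢 μ)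
    (hN0 : N 0 = 0) (hL2 : ∀ i, MemLp (N i) 2 μ) (ξ : ℝ) :
    Supermartingale (freedmanExp μ 𝒢 N ξ) 𝒢 μ :=
  supermartingale_nat (stronglyAdapted_freedmanExp hN.stronglyAdapted)
    (integrable_freedmanExp hN.stronglyAdapted hN0) (condExp_freedmanExp_succ_le hN hN0 hL2)

theorem Supermartingale.expected_stoppedValue_anti [SigmaFiniteFiltration μ 𝒢]
    {f : ℕ → Ω → ℝ} (hf : Supermartingale f 𝒢 μ) {τ π : Ω → ℕ∞} (hτ : IsStoppingTime 𝒢 τ)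
    (hπ : IsStoppingTime 𝒢 π) (hle : τ ≤ π) {n : ℕ} (hbdd : ∀ ω, π ω ≤ n) :
    ∫ ω, stoppedValue f π ω ∂μ ≤ ∫ ω, stoppedValue f τ ω ∂μ := by
  have h := hf.neg.expected_stoppedValue_mono hτ hπ hle hbdd
  simp only [stoppedValue, Pi.neg_apply, integral_neg, neg_le_neg_iff] at h
  exact h

theorem Supermartingale.maximal_ineq [IsFiniteMeasure μ] {f : ℕ → Ω → ℝ}
    (hf : Supermartingale f 𝒢 μ) (hnonneg : ∀ i ω, 0 ≤ f i ω) {c : ℝ} (hc : 0 ≤ c) (n : ℕ) :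
    c * μ.real {ω | ∃ i ≤ n, c ≤ f i ω} ≤ ∫ ω, f 0 ω ∂μ := by
  set τ : Ω → ℕ∞ := fun ω => (hittingBtwn f (Set.Ici c) 0 n ω : ℕ)
  have hτ : IsStoppingTime 𝒢 τ :=
    hf.stronglyAdapted.adapted.isStoppingTime_hittingBtwn measurableSet_Ici
  have hτn : ∀ ω, τ ω ≤ n := fun ω => WithTop.coe_le_coe.2 (hittingBtwn_le ω)
  have hsub : {ω | ∃ i ≤ n, c ≤ f i ω} ⊆ {ω | c ≤ stoppedValue f τ ω} :=
    fun ω ⟨i, hin, hi⟩ => stoppedValue_hittingBtwn_mem ⟨i, ⟨i.zero_le, hin⟩, hi⟩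
  calc c * μ.real {ω | ∃ i ≤ n, c ≤ f i ω}
      ≤ c * μ.real {ω | c ≤ stoppedValue f τ ω} :=
        mul_le_mul_of_nonneg_left (measureReal_mono hsub) hc
    _ ≤ ∫ ω, stoppedValue f τ ω ∂μ := mul_meas_ge_le_integral_of_nonneg
        (ae_of_all _ fun ω => hnonneg _ ω) (integrable_stoppedValue ℕ hτ hf.integrable hτn) c
    _ ≤ ∫ ω, stoppedValue f (fun _ => (0 : ℕ)) ω ∂μ := hf.expected_stoppedValue_anti
        (isStoppingTime_const 𝒢 0) hτ (fun ω => bot_le) hτn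
    _ = ∫ ω, f 0 ω ∂μ := rfl

end MeasureTheory

theorem martingale_freedman_bound_general {Ω : Type*} {m0 : MeasurableSpace Ω}
    (μ : Measure Ω) [IsProbabilityMeasure μ] (𝒢 : Filtration ℕ m0)
    (n : ℕ) (N : ℕ → Ω → ℝ) (hN : Martingale N 𝒢 μ) (hN0 : N 0 = 0)
    (hL2 : ∀ i, MemLp (N i) 2 μ)
    (W : ℕ → Ω → ℝ)
    (hW : ∀ i ω, W i ω = ∑ j ∈ Finset.Icc 1 i,
      ((μ[fun ω' => (N j ω' - N (j - 1) ω') ^ 2 | 𝒢 (j - 1)]) ω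
        + (N j ω - N (j - 1) ω) ^ 2))
    (ξ t : ℝ) (hξ : 0 < ξ) :
    μ {ω | ∃ i, 1 ≤ i ∧ i ≤ n ∧ N i ω > ξ / 2 * W i ω + t / ξ}
      ≤ ENNReal.ofReal (Real.exp (-t)) := by
  obtain rfl : W = freedmanVariation μ 𝒢 N := by
    ext i ω; rw [hW, freedmanVariation_eq_sum_Icc]
  set S := {ω | ∃ i ≤ n, Real.exp t ≤ freedmanExp μ 𝒢 N ξ i ω}
  have hS : Real.exp t * μ.real S ≤ 1 := by
    simpa [freedmanExp_zero hN0] using (hN.supermartingale_freedmanExp hN0 hL2 ξ).maximal_ineq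
      (fun i ω => (freedmanExp_pos i ω).le) (Real.exp_pos t).le n
  calc μ _ ≤ μ S := by
        refine measure_mono fun ω hω => ?_
        obtain ⟨i, -, hin, hi⟩ := hω
        exact ⟨i, hin, exp_le_freedmanExp hξ hi⟩
    _ = ENNReal.ofReal (μ.real S) := (ofReal_measureReal).symm
    _ ≤ ENNReal.ofReal (Real.exp (-t)) := by
      refine ENNReal.ofReal_le_ofReal ?_
      rw [Real.exp_neg, ← one_div, le_div_iff₀ (Real.exp_pos t)]
      linarith

/-- Freedman-type bound: for a square-integrable martingale `N` with `N 0 = 0`,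
with `W i = ∑_{j=1}^i (E[(N_j - N_{j-1})² | 𝒢_{j-1}] + (N_j - N_{j-1})²)`, for every
`ξ > 0` and `t ≥ 0`, `P(∃ 1 ≤ i ≤ n, N_i > (ξ/2) W_i + t/ξ) ≤ e^{-t}`. -/
theorem martingale_freedman_bound {Ω : Type*} {m0 : MeasurableSpace Ω}
    (μ : Measure Ω) [IsProbabilityMeasure μ] (𝒢 : Filtration ℕ m0)
    (n : ℕ) (N : ℕ → Ω → ℝ) (hN : Martingale N 𝒢 μ) (hN0 : N 0 = 0)
    (hL2 : ∀ i, MemLp (N i) 2 μ)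
    (W : ℕ → Ω → ℝ)
    (hW : ∀ i ω, W i ω = ∑ j ∈ Finset.Icc 1 i,
      ((μ[fun ω' => (N j ω' - N (j - 1) ω') ^ 2 | 𝒢 (j - 1)]) ω
        + (N j ω - N (j - 1) ω) ^ 2))
    (ξ t : ℝ) (hξ : 0 < ξ) (ht : 0 ≤ t) :
    μ {ω | ∃ i, 1 ≤ i ∧ i ≤ n ∧ N i ω > ξ / 2 * W i ω + t / ξ}
      ≤ ENNReal.ofReal (Real.exp (-t)) :=
  martingale_freedman_bound_general μ 𝒢 n N hN hN0 hL2 W hW ξ t hξ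
end

section
/- Let A be a random positive semidefinite linear operator on ℝᵖ with E[tr(A)] < ∞, let q ≥ 1, and suppose there is h > 0 such that E[⟨v, A v⟩^q] ≤ h^q · E[⟨v, A v⟩]^q for all v ∈ ℝᵖ. Then E[tr(A)^q] ≤ h^q · E[tr(A)]^q. -/
/-!
Since `A` is positive semidefinite, `tr A = ∑ᵢ ⟨eᵢ, A eᵢ⟩` is a sum of nonnegative random
variables. Minkowski's inequality in `L^q` and the moment hypothesis at `v = eᵢ` give
`‖tr A‖_q ≤ ∑ᵢ ‖⟨eᵢ, A eᵢ⟩‖_q ≤ h ∑ᵢ E⟨eᵢ, A eᵢ⟩ = h E[tr A]`.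
-/

open MeasureTheory Matrix

theorem integral_norm_finsetSum_rpow_inv_le {α ι E : Type*} [MeasurableSpace α] {μ : Measure α}
    [NormedAddCommGroup E] {f : ι → α → E} {s : Finset ι} {q : ℝ} (hq : 1 ≤ q)
    (hf : ∀ i ∈ s, MemLp (f i) (ENNReal.ofReal q) μ) :
    (∫ a, ‖∑ i ∈ s, f i a‖ ^ q ∂μ) ^ q⁻¹ ≤ ∑ i ∈ s, (∫ a, ‖f i a‖ ^ q ∂μ) ^ q⁻¹ := by
  have hq0 : ENNReal.ofReal q ≠ 0 := by simp; linarith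
  have hqt : ENNReal.ofReal q ≠ ⊤ := ENNReal.ofReal_ne_top
  have hmink := eLpNorm_sum_le (fun i hi => (hf i hi).aestronglyMeasurable)
    (ENNReal.one_le_ofReal.2 hq)
  rw [(memLp_finsetSum' s hf).eLpNorm_eq_integral_rpow_norm hq0 hqt,
    Finset.sum_congr rfl fun i hi => (hf i hi).eLpNorm_eq_integral_rpow_norm hq0 hqt,
    ← ENNReal.ofReal_sum_of_nonneg fun i _ => by positivity,
    ENNReal.ofReal_le_ofReal_iff (by positivity), ENNReal.toReal_ofReal (by linarith)] at hmink
  simpa only [Finset.sum_apply] using hmink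

section NonnegReal

variable {α : Type*} [MeasurableSpace α] {μ : Measure α} {q : ℝ}

theorem integral_norm_rpow_eq_of_nonneg {f : α → ℝ} (hf : 0 ≤ᵐ[μ] f) :
    ∫ a, ‖f a‖ ^ q ∂μ = ∫ a, f a ^ q ∂μ :=
  integral_congr_ae (hf.mono fun a ha => by simp only [Real.norm_of_nonneg ha])

theorem memLp_ofReal_of_integrable_rpow {f : α → ℝ} (hq : 0 < q)
    (hmeas : AEStronglyMeasurable f μ) (hnn : 0 ≤ᵐ[μ] f) (hint : Integrable (fun a => f a ^ q) μ) :
    MemLp f (ENNReal.ofReal q) μ := by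
  refine (integrable_norm_rpow_iff hmeas (by simpa using hq) ENNReal.ofReal_ne_top).1 ?_
  refine hint.congr (hnn.mono fun a ha => ?_)
  simp only [ENNReal.toReal_ofReal hq.le, Real.norm_of_nonneg ha]

theorem integral_finsetSum_rpow_le_of_nonneg {ι : Type*} {s : Finset ι} {f : ι → α → ℝ}
    {c : ι → ℝ} (hq : 1 ≤ q) (hf : ∀ i ∈ s, MemLp (f i) (ENNReal.ofReal q) μ)
    (hnn : ∀ i ∈ s, 0 ≤ᵐ[μ] f i) (hc : ∀ i ∈ s, 0 ≤ c i)
    (hbound : ∀ i ∈ s, ∫ a, f i a ^ q ∂μ ≤ c i ^ q) :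
    ∫ a, (∑ i ∈ s, f i a) ^ q ∂μ ≤ (∑ i ∈ s, c i) ^ q := by
  have hq0 : 0 < q := by linarith
  have hsum_nn : 0 ≤ᵐ[μ] fun a => ∑ i ∈ s, f i a := by
    filter_upwards [(ae_ball_iff s.countable_toSet).2 hnn] with a ha
    exact Finset.sum_nonneg ha
  have hterm : ∀ i ∈ s, (∫ a, ‖f i a‖ ^ q ∂μ) ^ q⁻¹ ≤ c i := fun i hi => by
    rw [integral_norm_rpow_eq_of_nonneg (hnn i hi),
      Real.rpow_inv_le_iff_of_pos (integral_nonneg_of_ae ?_) (hc i hi) hq0]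
    · exact hbound i hi
    · exact (hnn i hi).mono fun a ha => Real.rpow_nonneg ha q
  have hmink := integral_norm_finsetSum_rpow_inv_le hq hf
  rw [integral_norm_rpow_eq_of_nonneg hsum_nn] at hmink
  rw [← Real.rpow_inv_le_iff_of_pos (integral_nonneg_of_ae ?_) (Finset.sum_nonneg hc) hq0]
  · exact hmink.trans (Finset.sum_le_sum hterm)
  · exact hsum_nn.mono fun a ha => Real.rpow_nonneg ha q

end NonnegReal

theorem dotProduct_single_mulVec_single {n R : Type*} [Fintype n] [DecidableEq n]
    [NonAssocSemiring R] (M : Matrix n n R) (i : n) :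
    Pi.single i 1 ⬝ᵥ M *ᵥ Pi.single i 1 = M i i := by
  rw [mulVec_single_one, single_one_dotProduct, col_apply]

theorem trace_power_bound_general {Ω : Type*} [MeasurableSpace Ω]
    (μ : Measure Ω) [IsProbabilityMeasure μ] {p : ℕ}
    (A : Ω → Matrix (Fin p) (Fin p) ℝ)
    (hmeas : ∀ i j, Measurable (fun ω => A ω i j))
    (hpsd : ∀ᵐ ω ∂μ, (A ω).PosSemidef)
    (q : ℝ) (hq : 1 ≤ q) (h : ℝ) (hh : 0 < h)
    (hint : ∀ v : Fin p → ℝ, Integrable (fun ω => (v ⬝ᵥ (A ω).mulVec v) ^ q) μ)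
    (hmom : ∀ v : Fin p → ℝ,
      ∫ ω, (v ⬝ᵥ (A ω).mulVec v) ^ q ∂μ ≤ h ^ q * (∫ ω, v ⬝ᵥ (A ω).mulVec v ∂μ) ^ q) :
    ∫ ω, (A ω).trace ^ q ∂μ ≤ h ^ q * (∫ ω, (A ω).trace ∂μ) ^ q := by
  have hdiag_nn (i : Fin p) : 0 ≤ᵐ[μ] fun ω => A ω i i := hpsd.mono fun ω hω => hω.diag_nonneg
  have hdiag_int_nn (i : Fin p) : 0 ≤ ∫ ω, A ω i i ∂μ := integral_nonneg_of_ae (hdiag_nn i)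
  have hdiag_memLp (i : Fin p) : MemLp (fun ω => A ω i i) (ENNReal.ofReal q) μ :=
    memLp_ofReal_of_integrable_rpow (by linarith) (hmeas i i).aestronglyMeasurable (hdiag_nn i)
      (by simpa only [dotProduct_single_mulVec_single] using hint (Pi.single i 1))
  have hdiag_mom (i : Fin p) : ∫ ω, A ω i i ^ q ∂μ ≤ (h * ∫ ω, A ω i i ∂μ) ^ q := by
    rw [Real.mul_rpow hh.le (hdiag_int_nn i)]
    simpa only [dotProduct_single_mulVec_single] using hmom (Pi.single i 1)
  have hintegral_trace : ∫ ω, (A ω).trace ∂μ = ∑ i, ∫ ω, A ω i i ∂μ :=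
    integral_finsetSum _ fun i _ => (hdiag_memLp i).integrable (ENNReal.one_le_ofReal.2 hq)
  calc ∫ ω, (A ω).trace ^ q ∂μ
      ≤ (∑ i, h * ∫ ω, A ω i i ∂μ) ^ q :=
        integral_finsetSum_rpow_le_of_nonneg hq (fun i _ => hdiag_memLp i)
          (fun i _ => hdiag_nn i) (fun i _ => mul_nonneg hh.le (hdiag_int_nn i))
          (fun i _ => hdiag_mom i)
    _ = h ^ q * (∫ ω, (A ω).trace ∂μ) ^ q := by
        rw [← Finset.mul_sum, ← hintegral_trace, Real.mul_rpow hh.le (integral_nonneg_of_ae ?_)]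
        exact hpsd.mono fun ω hω => hω.trace_nonneg

/-- Trace-power lemma: if `A` is a random positive semidefinite matrix with integrable trace
and `E[⟨v, A v⟩^q] ≤ h^q E[⟨v, A v⟩]^q` for all `v`, then `E[tr(A)^q] ≤ h^q E[tr(A)]^q`. -/
theorem trace_power_bound {Ω : Type*} [MeasurableSpace Ω]
    (μ : Measure Ω) [IsProbabilityMeasure μ] {p : ℕ}
    (A : Ω → Matrix (Fin p) (Fin p) ℝ)
    (hmeas : ∀ i j, Measurable (fun ω => A ω i j))
    (hpsd : ∀ᵐ ω ∂μ, (A ω).PosSemidef)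
    (htr : Integrable (fun ω => (A ω).trace) μ)
    (q : ℝ) (hq : 1 ≤ q) (h : ℝ) (hh : 0 < h)
    (hint : ∀ v : Fin p → ℝ, Integrable (fun ω => (v ⬝ᵥ (A ω).mulVec v) ^ q) μ)
    (hmom : ∀ v : Fin p → ℝ,
      ∫ ω, (v ⬝ᵥ (A ω).mulVec v) ^ q ∂μ ≤ h ^ q * (∫ ω, v ⬝ᵥ (A ω).mulVec v ∂μ) ^ q) :
    ∫ ω, (A ω).trace ^ q ∂μ ≤ h ^ q * (∫ ω, (A ω).trace ∂μ) ^ q :=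
  trace_power_bound_general μ A hmeas hpsd q hq h hh hint hmom
end

section
/- Let Σ̂ and Σ be p×p real matrices with non-negative diagonal entries, let η ∈ (0,1) and d ∈ {2,…,p}, and suppose vᵀΣ̂v ≥ (1−η)vᵀΣv for every v ∈ ℝᵖ with at most d nonzero coordinates. Let D be a diagonal matrix with D[j,j] ≥ max(0, Σ̂[j,j] − (1−η)Σ[j,j]) for each j. Then for every x ∈ ℝᵖ, xᵀΣ̂x ≥ (1−η)·xᵀΣx − |D^{1/2}x|₁² / (d−1). -/
/-!
Set `A = Σ̂ - (1 - η) Σ`, so that `vᵀ A v ≥ 0` for `d`-sparse `v` and `A j j ≤ D j`. Maurey's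
empirical method: draw `d` indices `J₁, …, J_d` independently from a probability vector `π` and
put `v = ∑ₖ (x / π)_{Jₖ} e_{Jₖ}`, a `d`-sparse vector with mean `d x`. Averaging
`vᵀ A v ≥ 0` gives `0 ≤ d (d - 1) xᵀ A x + d ∑ⱼ xⱼ² A j j / πⱼ`, and `π ∝ √D |x|` makes the last
sum at most `(∑ⱼ √(D j) |xⱼ|)²`. Since `π` must be positive, it is taken `∝ √D |x| + ε` and
`ε → 0`.
-/

open Matrix Finset

section ProductWeights

variable {ι κ : Type*} [Fintype ι] [Fintype κ] [DecidableEq κ] {π : ι → ℝ}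

theorem sum_prod_mul_prod_apply (π : ι → ℝ) (g : κ → ι → ℝ) :
    ∑ J : κ → ι, (∏ k, π (J k)) * ∏ k, g k (J k) = ∏ k, ∑ a, π a * g k a := by
  simp_rw [← prod_mul_distrib]
  exact (Fintype.prod_sum fun k a => π a * g k a).symm

theorem sum_prod_mul_apply (hπ : ∑ a, π a = 1) (k₀ : κ) (G : ι → ℝ) :
    ∑ J : κ → ι, (∏ k, π (J k)) * G (J k₀) = ∑ a, π a * G a := by
  simpa [mul_ite, sum_ite_irrel, hπ, prod_ite_eq'] using
    sum_prod_mul_prod_apply π fun k a => if k = k₀ then G a else 1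

theorem sum_prod_mul_apply_mul_apply (hπ : ∑ a, π a = 1) {k₁ k₂ : κ} (hk : k₁ ≠ k₂)
    (u w : ι → ℝ) :
    ∑ J : κ → ι, (∏ k, π (J k)) * (u (J k₁) * w (J k₂)) =
      (∑ a, π a * u a) * ∑ a, π a * w a := by
  let g : κ → ι → ℝ := fun k a => if k = k₁ then u a else if k = k₂ then w a else 1
  have hJ (J : κ → ι) : ∏ k, g k (J k) = u (J k₁) * w (J k₂) := by
    rw [prod_eq_mul k₁ k₂ hk] <;> simp +contextual [g, hk.symm]
  have hsum : ∏ k, ∑ a, π a * g k a = (∑ a, π a * u a) * ∑ a, π a * w a := by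
    rw [prod_eq_mul k₁ k₂ hk] <;> simp +contextual [g, hk.symm, hπ]
  simpa only [hJ, hsum] using sum_prod_mul_prod_apply π g

theorem sum_prod_mul_apply₂ [DecidableEq ι] (hπ : ∑ a, π a = 1) {k₁ k₂ : κ} (hk : k₁ ≠ k₂)
    (F : ι → ι → ℝ) :
    ∑ J : κ → ι, (∏ k, π (J k)) * F (J k₁) (J k₂) = ∑ a, ∑ b, π a * π b * F a b := by
  have hF (J : κ → ι) : F (J k₁) (J k₂) = ∑ a, (if J k₁ = a then 1 else 0) * F a (J k₂) := by
    simp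
  simp_rw [hF, mul_sum]
  rw [sum_comm]
  refine sum_congr rfl fun a _ => ?_
  rw [sum_prod_mul_apply_mul_apply hπ hk (fun b => if b = a then 1 else 0) (F a)]
  simp [mul_sum, mul_assoc]

end ProductWeights

section Maurey

variable {ι κ : Type*} [Fintype ι] [DecidableEq ι] [Fintype κ]

/-- The sparse vector `∑ₖ c (J k) e_{J k}`; with `c = x / π` and `J ∼ π^⊗κ` its mean is
`card κ • x`. -/
def sampleVec (c : ι → ℝ) (J : κ → ι) : ι → ℝ := ∑ k, Pi.single (J k) (c (J k))

theorem card_sampleVec_ne_zero_le (c : ι → ℝ) (J : κ → ι) :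
    #{j | sampleVec c J j ≠ 0} ≤ Fintype.card κ := by
  calc #{j | sampleVec c J j ≠ 0} ≤ #(univ.image J) := by
        refine card_le_card fun j hj => ?_
        obtain ⟨k, -, hk⟩ := exists_ne_zero_of_sum_ne_zero (by simpa [sampleVec] using hj)
        exact mem_image.2 ⟨k, mem_univ k, by_contra fun h => hk (by simp [Ne.symm h])⟩
    _ ≤ Fintype.card κ := card_image_le

theorem sampleVec_dotProduct_mulVec (A : Matrix ι ι ℝ) (c : ι → ℝ) (J : κ → ι) :
    sampleVec c J ⬝ᵥ A *ᵥ sampleVec c J = ∑ k, ∑ l, c (J k) * A (J k) (J l) * c (J l) := by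
  simp only [sampleVec, mulVec_sum, dotProduct_sum, sum_dotProduct, single_dotProduct]
  simp only [mulVec, dotProduct, Pi.single_apply, mul_ite, mul_zero, sum_ite_eq', mem_univ,
    if_true, mul_assoc]
  exact sum_comm

theorem maurey_empirical_bound [DecidableEq κ] [Nonempty κ] {A : Matrix ι ι ℝ}
    (hA : ∀ v : ι → ℝ, #{j | v j ≠ 0} ≤ Fintype.card κ → 0 ≤ v ⬝ᵥ A *ᵥ v)
    {π : ι → ℝ} (hπ0 : ∀ a, 0 < π a) (hπ : ∑ a, π a = 1) (x : ι → ℝ) :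
    0 ≤ (Fintype.card κ - 1) * (x ⬝ᵥ A *ᵥ x) + ∑ a, x a ^ 2 * A a a / π a := by
  set n : ℝ := (Fintype.card κ : ℝ)
  set c : ι → ℝ := fun a => x a / π a
  have hc (a : ι) : π a * c a = x a := mul_div_cancel₀ _ (hπ0 a).ne'
  let F : ι → ι → ℝ := fun a b => c a * A a b * c b
  have hoff : ∑ a, ∑ b, π a * π b * F a b = x ⬝ᵥ A *ᵥ x := by
    simp only [dotProduct, mulVec, mul_sum]
    refine sum_congr rfl fun a _ => sum_congr rfl fun b _ => ?_
    rw [← hc a, ← hc b]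
    ring
  have hdiag : ∑ a, π a * F a a = ∑ a, x a ^ 2 * A a a / π a :=
    sum_congr rfl fun a _ => by
      simp only [F, c]
      field_simp
  have hmean : ∑ J : κ → ι, (∏ k, π (J k)) * (sampleVec c J ⬝ᵥ A *ᵥ sampleVec c J) =
      n * ((n - 1) * (x ⬝ᵥ A *ᵥ x) + ∑ a, x a ^ 2 * A a a / π a) := by
    calc _ = ∑ k, ∑ l, ∑ J : κ → ι, (∏ k, π (J k)) * F (J k) (J l) := by
          simp_rw [sampleVec_dotProduct_mulVec, mul_sum]
          rw [sum_comm]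
          exact sum_congr rfl fun k _ => sum_comm
      _ = ∑ k : κ, ∑ l : κ,
            (x ⬝ᵥ A *ᵥ x + if k = l then ∑ a, x a ^ 2 * A a a / π a - x ⬝ᵥ A *ᵥ x else 0) := by
          refine sum_congr rfl fun k _ => sum_congr rfl fun l _ => ?_
          split_ifs with hkl
          · subst hkl
            rw [sum_prod_mul_apply hπ k fun a => F a a, hdiag]
            ring
          · rw [sum_prod_mul_apply₂ hπ hkl F, hoff, add_zero]
      _ = _ := by
          simp only [sum_add_distrib, sum_const, card_univ, nsmul_eq_mul, sum_ite_eq, mem_univ,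
            if_true, n]
          ring
  have hmean_nonneg : 0 ≤ ∑ J : κ → ι, (∏ k, π (J k)) * (sampleVec c J ⬝ᵥ A *ᵥ sampleVec c J) :=
    sum_nonneg fun J _ => mul_nonneg (prod_nonneg fun k _ => (hπ0 _).le)
      (hA _ (card_sampleVec_ne_zero_le c J))
  rw [hmean] at hmean_nonneg
  exact nonneg_of_mul_nonneg_right hmean_nonneg (by positivity)

theorem maurey_empirical_bound_of_diag_le [Nonempty ι] {d : ℕ} (hd : 1 ≤ d)
    {A : Matrix ι ι ℝ} (hA : ∀ v : ι → ℝ, #{j | v j ≠ 0} ≤ d → 0 ≤ v ⬝ᵥ A *ᵥ v) {D : ι → ℝ}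
    (hD : ∀ j, 0 ≤ D j) (hAD : ∀ j, A j j ≤ D j) (x : ι → ℝ) {ε : ℝ} (hε : 0 < ε) :
    0 ≤ (d - 1) * (x ⬝ᵥ A *ᵥ x) +
      (∑ j, √(D j) * |x j|) * ((∑ j, √(D j) * |x j|) + Fintype.card ι * ε) := by
  set t : ι → ℝ := fun j => √(D j) * |x j|
  set S := ∑ j, t j
  set m : ℝ := (Fintype.card ι : ℝ)
  have ht0 (j : ι) : 0 ≤ t j := by positivity
  have hmass : 0 < S + m * ε := by
    have : 0 ≤ S := sum_nonneg fun j _ => ht0 j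
    positivity
  -- sampling proportionally to `t + ε` nearly minimises `∑ t a ^ 2 / π a`, whose minimum is `S ^ 2`
  set π : ι → ℝ := fun a => (t a + ε) / (S + m * ε)
  have hπ0 (a : ι) : 0 < π a := div_pos (by linarith [ht0 a]) hmass
  have hπ : ∑ a, π a = 1 := by
    rw [← sum_div, sum_add_distrib, sum_const, card_univ, nsmul_eq_mul]
    exact div_self hmass.ne'
  have hterm (a : ι) : x a ^ 2 * A a a / π a ≤ t a * (S + m * ε) := by
    have ht_sq : x a ^ 2 * D a = t a ^ 2 := by
      rw [mul_pow, Real.sq_sqrt (hD a), sq_abs, mul_comm]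
    calc x a ^ 2 * A a a / π a ≤ x a ^ 2 * D a / π a :=
          div_le_div_of_nonneg_right (by gcongr; exact hAD a) (hπ0 a).le
      _ = t a * (S + m * ε) * (t a / (t a + ε)) := by
          rw [ht_sq]
          simp only [π]
          field_simp
      _ ≤ t a * (S + m * ε) := mul_le_of_le_one_right (by positivity)
          (div_le_one_of_le₀ (by linarith) (by linarith [ht0 a]))
  have : Nonempty (Fin d) := ⟨⟨0, hd⟩⟩
  calc 0 ≤ (d - 1) * (x ⬝ᵥ A *ᵥ x) + ∑ a, x a ^ 2 * A a a / π a := by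
        simpa using maurey_empirical_bound (κ := Fin d) (by simpa using hA) hπ0 hπ x
    _ ≤ (d - 1) * (x ⬝ᵥ A *ᵥ x) + S * (S + m * ε) := by
        gcongr
        calc _ ≤ ∑ a, t a * (S + m * ε) := sum_le_sum fun a _ => hterm a
          _ = _ := (sum_mul ..).symm

theorem neg_sq_div_le_dotProduct_mulVec {d : ℕ} (hd : 2 ≤ d) {A : Matrix ι ι ℝ}
    (hA : ∀ v : ι → ℝ, #{j | v j ≠ 0} ≤ d → 0 ≤ v ⬝ᵥ A *ᵥ v) {D : ι → ℝ}
    (hD : ∀ j, 0 ≤ D j) (hAD : ∀ j, A j j ≤ D j) (x : ι → ℝ) :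
    -(∑ j, √(D j) * |x j|) ^ 2 / (d - 1) ≤ x ⬝ᵥ A *ᵥ x := by
  rcases isEmpty_or_nonempty ι with hι | hι
  · simp [dotProduct]
  set S := ∑ j, √(D j) * |x j|
  set X := x ⬝ᵥ A *ᵥ x
  have hlim : Filter.Tendsto (fun ε : ℝ => (d - 1) * X + S * (S + Fintype.card ι * ε))
      (nhdsWithin 0 (Set.Ioi 0)) (nhds ((d - 1) * X + S ^ 2)) := by
    refine tendsto_nhdsWithin_of_tendsto_nhds ?_
    have hcont : Continuous fun ε : ℝ => (d - 1) * X + S * (S + Fintype.card ι * ε) := by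
      fun_prop
    simpa [sq] using hcont.tendsto 0
  have hlimit : 0 ≤ (d - 1) * X + S ^ 2 := ge_of_tendsto hlim <|
    eventually_nhdsWithin_of_forall fun ε hε =>
      maurey_empirical_bound_of_diag_le (by omega) hA hD hAD x hε
  have hd1 : (0 : ℝ) < d - 1 := by
    have : (2 : ℝ) ≤ d := by exact_mod_cast hd
    linarith
  rw [div_le_iff₀ hd1]
  linarith

end Maurey

/-- `D` is the diagonal of the diagonal matrix `D`. -/
theorem transfer_principle_general {p : ℕ} (Sigmahat Sigma : Matrix (Fin p) (Fin p) ℝ)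
    (η : ℝ) (d : ℕ) (hd : 2 ≤ d)
    (hsparse : ∀ v : Fin p → ℝ,
      (Finset.univ.filter (fun j => v j ≠ 0)).card ≤ d →
      v ⬝ᵥ Sigmahat.mulVec v ≥ (1 - η) * (v ⬝ᵥ Sigma.mulVec v))
    (D : Fin p → ℝ)
    (hD : ∀ j, D j ≥ max 0 (Sigmahat j j - (1 - η) * Sigma j j)) :
    ∀ x : Fin p → ℝ,
      x ⬝ᵥ Sigmahat.mulVec x ≥
        (1 - η) * (x ⬝ᵥ Sigma.mulVec x) -
          (∑ j, |Real.sqrt (D j) * x j|) ^ 2 / ((d : ℝ) - 1) := by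
  intro x
  set A := Sigmahat - (1 - η) • Sigma
  have hform (v : Fin p → ℝ) :
      v ⬝ᵥ A *ᵥ v = v ⬝ᵥ Sigmahat *ᵥ v - (1 - η) * (v ⬝ᵥ Sigma *ᵥ v) := by
    simp [A, sub_mulVec, dotProduct_sub, smul_mulVec, dotProduct_smul]
  have hA (v : Fin p → ℝ) (hv : #{j | v j ≠ 0} ≤ d) : 0 ≤ v ⬝ᵥ A *ᵥ v := by
    rw [hform]
    linarith [hsparse v hv]
  have hAD (j : Fin p) : A j j ≤ D j := by
    simpa [A] using (le_max_right _ _).trans (hD j)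
  have hbound := neg_sq_div_le_dotProduct_mulVec hd hA
    (fun j => (le_max_left _ _).trans (hD j)) hAD x
  simp only [abs_mul, abs_of_nonneg (Real.sqrt_nonneg _)]
  rw [hform, neg_div] at hbound
  linarith

/-- Transfer Principle: lower-tail control of a quadratic form over `d`-sparse vectors
transfers to all vectors, with an `ℓ₁` correction term. `D` is the vector of diagonal
entries of the diagonal matrix. -/
theorem transfer_principle {p : ℕ} (Sigmahat Sigma : Matrix (Fin p) (Fin p) ℝ)
    (hdiag1 : ∀ j, 0 ≤ Sigmahat j j) (hdiag2 : ∀ j, 0 ≤ Sigma j j)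
    (η : ℝ) (hη : η ∈ Set.Ioo (0 : ℝ) 1) (d : ℕ) (hd : 2 ≤ d) (hdp : d ≤ p)
    (hsparse : ∀ v : Fin p → ℝ,
      (Finset.univ.filter (fun j => v j ≠ 0)).card ≤ d →
      v ⬝ᵥ Sigmahat.mulVec v ≥ (1 - η) * (v ⬝ᵥ Sigma.mulVec v))
    (D : Fin p → ℝ)
    (hD : ∀ j, D j ≥ max 0 (Sigmahat j j - (1 - η) * Sigma j j)) :
    ∀ x : Fin p → ℝ,
      x ⬝ᵥ Sigmahat.mulVec x ≥
        (1 - η) * (x ⬝ᵥ Sigma.mulVec x) -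
          (∑ j, |Real.sqrt (D j) * x j|) ^ 2 / ((d : ℝ) - 1) :=
  transfer_principle_general Sigmahat Sigma η d hd hsparse D hD
end

section
/- Let A be a symmetric p×p real matrix with A[j,j] ≤ 1 for all j, and suppose vᵀAv ≥ 0 for all vectors v with at most d nonzero coordinates (d ≥ 2). Then for every y ∈ ℝᵖ, yᵀAy ≥ −|y|₁²/(d−1). -/
open Matrix Finset

namespace MaureyAux

variable {p : ℕ}

/-- sign vector -/
noncomputable def sg (y : Fin p → ℝ) : Fin p → ℝ := fun j => if 0 ≤ y j then 1 else -1

lemma sg_mul_abs (y : Fin p → ℝ) (j : Fin p) : sg y j * |y j| = y j := by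
  unfold sg; split <;> simp [abs_of_nonneg, abs_of_neg, *] <;>
  · rename_i h; rw [abs_of_neg (lt_of_not_ge h)]; ring

lemma sg_sq (y : Fin p → ℝ) (j : Fin p) : sg y j * sg y j = 1 := by
  unfold sg; split <;> norm_num

/-- random sparse vector associated to f -/
noncomputable def vv (y : Fin p → ℝ) {d : ℕ} (f : Fin d → Fin p) : Fin p → ℝ :=
  fun k => ∑ i, if f i = k then sg y k else 0

lemma vv_zero (y : Fin p → ℝ) (f : Fin 0 → Fin p) : vv y f = 0 := by
  funext k; simp [vv]

lemma vv_cons (y : Fin p → ℝ) {d : ℕ} (j : Fin p) (g : Fin d → Fin p) :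
    vv y (Fin.cons j g) = fun k => vv y g k + (if j = k then sg y k else 0) := by
  funext k
  simp [vv, Fin.sum_univ_succ, add_comm]

lemma vv_sparse (y : Fin p → ℝ) {d : ℕ} (f : Fin d → Fin p) :
    (Finset.univ.filter (fun j => vv y f j ≠ 0)).card ≤ d := by
  have hsub : (Finset.univ.filter (fun j => vv y f j ≠ 0)) ⊆ Finset.univ.image f := by
    intro k hk
    simp only [mem_filter, mem_univ, true_and] at hk
    simp only [mem_image, mem_univ, true_and]
    by_contra hc
    push_neg at hc
    exact hk (Finset.sum_eq_zero fun i _ => by simp [hc i])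
  calc (Finset.univ.filter (fun j => vv y f j ≠ 0)).card
      ≤ (Finset.univ.image f).card := Finset.card_le_card hsub
    _ ≤ (Finset.univ : Finset (Fin d)).card := Finset.card_image_le
    _ = d := by simp


variable (A : Matrix (Fin p) (Fin p) ℝ) (y : Fin p → ℝ)

/-- total weighted quadratic form -/
noncomputable def TT (d : ℕ) : ℝ :=
  ∑ f : Fin d → Fin p, (∏ i, |y (f i)|) * (vv y f ⬝ᵥ A.mulVec (vv y f))

/-- total weighted linear form -/
noncomputable def MM (d : ℕ) : ℝ :=
  ∑ f : Fin d → Fin p, (∏ i, |y (f i)|) * (y ⬝ᵥ A.mulVec (vv y f))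

lemma sum_fun_succ {d : ℕ} (F : (Fin (d+1) → Fin p) → ℝ) :
    ∑ f : Fin (d+1) → Fin p, F f = ∑ j : Fin p, ∑ g : Fin d → Fin p, F (Fin.cons j g) := by
  have := Fintype.sum_equiv (Fin.consEquiv (fun _ : Fin (d+1) => Fin p))
    (fun q => F (Fin.cons q.1 q.2)) F (fun q => rfl)
  rw [← this, Fintype.sum_prod_type]

lemma weight_sum : ∀ d : ℕ, (∑ f : Fin d → Fin p, ∏ i, |y (f i)|) = (∑ j, |y j|) ^ d := by
  intro d
  induction d with
  | zero => simp
  | succ d ih =>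
    rw [sum_fun_succ]
    simp only [Fin.prod_univ_succ, Fin.cons_zero, Fin.cons_succ]
    rw [pow_succ, ← ih, mul_comm]
    rw [Finset.sum_mul]
    congr 1; funext j
    rw [Finset.mul_sum]


lemma dot_symm (hsym : A.IsSymm) (v w : Fin p → ℝ) :
    v ⬝ᵥ A.mulVec w = w ⬝ᵥ A.mulVec v := by
  rw [Matrix.dotProduct_mulVec, ← Matrix.mulVec_transpose, hsym.eq, dotProduct_comm]

lemma single_dot (j : Fin p) (v : Fin p → ℝ) :
    (fun k => if j = k then sg y k else 0) ⬝ᵥ v = sg y j * v j := by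
  simp [dotProduct, ite_mul, zero_mul, Finset.sum_ite_eq]

lemma mulVec_single (j k : Fin p) :
    A.mulVec (fun l => if j = l then sg y l else 0) k = A k j * sg y j := by
  simp [mulVec, dotProduct, mul_ite, mul_zero, Finset.sum_ite_eq]

lemma dot_single (j : Fin p) (w : Fin p → ℝ) :
    w ⬝ᵥ A.mulVec (fun l => if j = l then sg y l else 0) = sg y j * ∑ k, w k * A k j := by
  simp only [dotProduct, mulVec_single, Finset.mul_sum]
  exact Finset.sum_congr rfl fun k _ => by ring

lemma quad_add_single (j : Fin p) (w : Fin p → ℝ) :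
    (fun k => w k + (if j = k then sg y k else 0)) ⬝ᵥ
        A.mulVec (fun k => w k + (if j = k then sg y k else 0)) =
      w ⬝ᵥ A.mulVec w + sg y j * (∑ k, w k * A k j)
        + sg y j * (∑ l, A j l * w l) + A j j := by
  have huv : (fun k => w k + (if j = k then sg y k else 0))
      = w + (fun k => if j = k then sg y k else 0) := rfl
  rw [huv, Matrix.mulVec_add, dotProduct_add, add_dotProduct,
    add_dotProduct, dot_single, single_dot, single_dot]
  have h1 : A.mulVec w j = ∑ l, A j l * w l := rfl
  rw [mulVec_single, h1]
  linear_combination (A j j) * (sg_sq y j)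

lemma dot_aux (hsym : A.IsSymm) (v : Fin p → ℝ) :
    ∑ j, y j * ∑ k, v k * A k j = y ⬝ᵥ A.mulVec v := by
  have hA : ∀ j k, A k j = A j k := fun j k => hsym.apply j k
  calc ∑ j, y j * ∑ k, v k * A k j
      = ∑ j, y j * ∑ k, A j k * v k := by
        refine Finset.sum_congr rfl fun j _ => ?_
        congr 1
        refine Finset.sum_congr rfl fun k _ => ?_
        rw [hA j k]; ring
    _ = y ⬝ᵥ A.mulVec v := rfl

lemma dot_aux2 (v : Fin p → ℝ) :
    ∑ j, y j * ∑ l, A j l * v l = y ⬝ᵥ A.mulVec v := rfl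

lemma MM_succ (hsym : A.IsSymm) (d : ℕ) :
    MM A y (d+1) = (∑ j, |y j|) * MM A y d
      + (∑ j, |y j|) ^ d * (y ⬝ᵥ A.mulVec y) := by
  unfold MM
  rw [sum_fun_succ]
  have step : ∀ (j : Fin p) (g : Fin d → Fin p),
      (∏ i, |y ((Fin.cons j g : Fin (d+1) → Fin p) i)|) * (y ⬝ᵥ A.mulVec (vv y (Fin.cons j g)))
      = |y j| * ((∏ i, |y (g i)|) * (y ⬝ᵥ A.mulVec (vv y g)))
        + y j * ((∏ i, |y (g i)|) * ∑ k, y k * A k j) := by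
    intro j g
    rw [vv_cons]
    have hadd : (fun k => vv y g k + (if j = k then sg y k else 0))
        = vv y g + (fun k => if j = k then sg y k else 0) := rfl
    rw [hadd, Matrix.mulVec_add, dotProduct_add, dot_single]
    rw [Fin.prod_univ_succ]
    simp only [Fin.cons_zero, Fin.cons_succ]
    linear_combination ((∏ i, |y (g i)|) * ∑ k, y k * A k j) * (sg_mul_abs y j)
  refine Eq.trans (Finset.sum_congr rfl fun j _ => Finset.sum_congr rfl fun g _ => step j g) ?_
  simp only [Finset.sum_add_distrib]
  congr 1
  · rw [Finset.sum_mul]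
    exact Finset.sum_congr rfl fun j _ => by rw [Finset.mul_sum]
  · rw [Finset.sum_comm]
    have : ∀ g : Fin d → Fin p,
        ∑ j, y j * ((∏ i, |y (g i)|) * ∑ k, y k * A k j)
          = (∏ i, |y (g i)|) * (y ⬝ᵥ A.mulVec y) := by
      intro g
      rw [← dot_aux A y hsym y, Finset.mul_sum]
      exact Finset.sum_congr rfl fun j _ => by ring
    simp only [this]
    rw [← Finset.sum_mul, weight_sum]

lemma TT_succ (hsym : A.IsSymm) (d : ℕ) :
    TT A y (d+1) = (∑ j, |y j|) * TT A y d + 2 * MM A y d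
      + (∑ j, |y j| * A j j) * (∑ j, |y j|) ^ d := by
  unfold TT
  rw [sum_fun_succ]
  have step : ∀ (j : Fin p) (g : Fin d → Fin p),
      (∏ i, |y ((Fin.cons j g : Fin (d+1) → Fin p) i)|) *
          (vv y (Fin.cons j g) ⬝ᵥ A.mulVec (vv y (Fin.cons j g)))
      = |y j| * ((∏ i, |y (g i)|) * (vv y g ⬝ᵥ A.mulVec (vv y g)))
        + y j * ((∏ i, |y (g i)|) * ∑ k, vv y g k * A k j)
        + y j * ((∏ i, |y (g i)|) * ∑ l, A j l * vv y g l)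
        + (|y j| * A j j) * (∏ i, |y (g i)|) := by
    intro j g
    rw [vv_cons, quad_add_single]
    rw [Fin.prod_univ_succ]
    simp only [Fin.cons_zero, Fin.cons_succ]
    linear_combination ((∏ i, |y (g i)|) * (∑ k, vv y g k * A k j)
      + (∏ i, |y (g i)|) * (∑ l, A j l * vv y g l)) * (sg_mul_abs y j)
  refine Eq.trans (Finset.sum_congr rfl fun j _ => Finset.sum_congr rfl fun g _ => step j g) ?_
  simp only [Finset.sum_add_distrib]
  have e1 : ∑ j : Fin p, ∑ g : Fin d → Fin p,
      |y j| * ((∏ i, |y (g i)|) * (vv y g ⬝ᵥ A.mulVec (vv y g)))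
      = (∑ j, |y j|) * TT A y d := by
    unfold TT
    rw [Finset.sum_mul]
    exact Finset.sum_congr rfl fun j _ => by rw [Finset.mul_sum]
  have e2 : ∑ j : Fin p, ∑ g : Fin d → Fin p,
      y j * ((∏ i, |y (g i)|) * ∑ k, vv y g k * A k j) = MM A y d := by
    rw [Finset.sum_comm]
    unfold MM
    refine Finset.sum_congr rfl fun g _ => ?_
    rw [← dot_aux A y hsym (vv y g), Finset.mul_sum]
    exact Finset.sum_congr rfl fun j _ => by ring
  have e3 : ∑ j : Fin p, ∑ g : Fin d → Fin p,
      y j * ((∏ i, |y (g i)|) * ∑ l, A j l * vv y g l) = MM A y d := by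
    rw [Finset.sum_comm]
    unfold MM
    refine Finset.sum_congr rfl fun g _ => ?_
    rw [← dot_aux2 A y (vv y g), Finset.mul_sum]
    exact Finset.sum_congr rfl fun j _ => by ring
  have e4 : ∑ j : Fin p, ∑ g : Fin d → Fin p,
      (|y j| * A j j) * (∏ i, |y (g i)|)
      = (∑ j, |y j| * A j j) * (∑ j, |y j|) ^ d := by
    rw [← weight_sum y d, Finset.sum_mul]
    exact Finset.sum_congr rfl fun j _ => by rw [Finset.mul_sum]
  rw [e1, e2, e3, e4]
  unfold TT
  ring


lemma MM_formula (hsym : A.IsSymm) : ∀ d : ℕ,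
    MM A y d * (∑ j, |y j|) = (d : ℝ) * (∑ j, |y j|) ^ d * (y ⬝ᵥ A.mulVec y) := by
  intro d
  induction d with
  | zero => simp [MM, vv_zero]
  | succ d ih =>
    rw [MM_succ A y hsym d]
    push_cast
    linear_combination (∑ j, |y j|) * ih

lemma TT_formula (hsym : A.IsSymm) : ∀ d : ℕ,
    TT A y d * (∑ j, |y j|) ^ 2
      = (d : ℝ) * ((d : ℝ) - 1) * (∑ j, |y j|) ^ d * (y ⬝ᵥ A.mulVec y)
        + (d : ℝ) * (∑ j, |y j|) ^ (d + 1) * (∑ j, |y j| * A j j) := by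
  intro d
  induction d with
  | zero => simp [TT, vv_zero]
  | succ d ih =>
    rw [TT_succ A y hsym d]
    push_cast
    linear_combination (∑ j, |y j|) * ih
      + 2 * (∑ j, |y j|) * MM_formula A y hsym d

end MaureyAux

open MaureyAux in
/-- Core step of the transfer principle: if a symmetric matrix with diagonal entries at most 1
is positive semidefinite on `d`-sparse vectors, then its quadratic form is bounded below by
`-|y|₁² / (d - 1)` for every vector `y`. -/
theorem maurey_sparse_lower_bound {p : ℕ} (A : Matrix (Fin p) (Fin p) ℝ)
    (hsym : A.IsSymm) (hdiag : ∀ j, A j j ≤ 1) (d : ℕ) (hd : 2 ≤ d)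
    (hsparse : ∀ v : Fin p → ℝ,
      (Finset.univ.filter (fun j => v j ≠ 0)).card ≤ d → 0 ≤ v ⬝ᵥ A.mulVec v)
    (y : Fin p → ℝ) :
    y ⬝ᵥ A.mulVec y ≥ -((∑ j, |y j|) ^ 2 / ((d : ℝ) - 1)) := by
  by_cases hS0 : (∑ j, |y j|) = 0
  · have hy : y = 0 := by
      funext j
      have := (Finset.sum_eq_zero_iff_of_nonneg
        (fun j _ => abs_nonneg (y j))).mp hS0 j (Finset.mem_univ j)
      simpa using this
    rw [hy]
    simp
  · set S := ∑ j, |y j| with hSdef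
    have hS : 0 < S := lt_of_le_of_ne (Finset.sum_nonneg fun j _ => abs_nonneg (y j))
      (Ne.symm hS0)
    have hT : 0 ≤ TT A y d :=
      Finset.sum_nonneg fun f _ => mul_nonneg
        (Finset.prod_nonneg fun i _ => abs_nonneg _) (hsparse _ (vv_sparse y f))
    have hCC : (∑ j, |y j| * A j j) ≤ S := by
      refine Finset.sum_le_sum fun j _ => ?_
      calc |y j| * A j j ≤ |y j| * 1 :=
            mul_le_mul_of_nonneg_left (hdiag j) (abs_nonneg _)
        _ = |y j| := mul_one _
    have key : 0 ≤ (d : ℝ) * ((d : ℝ) - 1) * S ^ d * (y ⬝ᵥ A.mulVec y)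
        + (d : ℝ) * S ^ (d + 1) * (∑ j, |y j| * A j j) := by
      rw [← TT_formula A y hsym d]
      exact mul_nonneg hT (sq_nonneg _)
    have hd1 : (2 : ℝ) ≤ (d : ℝ) := by exact_mod_cast hd
    have hSd : 0 < S ^ d := pow_pos hS d
    have h1 : (d : ℝ) * S ^ (d + 1) * (∑ j, |y j| * A j j)
        ≤ (d : ℝ) * S ^ (d + 1) * S := by
      refine mul_le_mul_of_nonneg_left hCC ?_
      positivity
    simp only [pow_succ] at key h1
    have h2 : 0 ≤ (d : ℝ) * S ^ d * (((d : ℝ) - 1) * (y ⬝ᵥ A.mulVec y) + S ^ 2) := by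
      nlinarith [key, h1]
    have h3 : 0 < (d : ℝ) * S ^ d := by positivity
    have h4 : 0 ≤ ((d : ℝ) - 1) * (y ⬝ᵥ A.mulVec y) + S ^ 2 := by
      by_contra hneg
      push_neg at hneg
      nlinarith [h2, h3]
    have hden : 0 < (d : ℝ) - 1 := by linarith
    rw [ge_iff_le, neg_le, le_div_iff₀ hden] at *
    nlinarith [h4]
end

section
/- Let μ₀, μ₁ be probability measures on a measurable space with μ₁ absolutely continuous with respect to μ₀, and let h be a measurable function such that e^h is μ₀-integrable and h is μ₁-integrable. Then ∫h dμ₁ ≤ ln(∫e^h dμ₀) + K(μ₁|μ₀), where K(μ₁|μ₀) = ∫ ln(dμ₁/dμ₀) dμ₁ is the Kullback–Leibler divergence. -/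
open MeasureTheory Real

/-- Gibbs' inequality applied to `μ` against the tilted measure `ν.tilted f`, whose
log-likelihood ratio differs from `llr μ ν` by `-f + log ∫ exp f ∂ν`. -/
theorem integral_le_log_integral_exp_add_integral_llr {α : Type*} [MeasurableSpace α]
    {μ ν : Measure α} [IsProbabilityMeasure μ] [SigmaFinite ν] {f : α → ℝ}
    (hμν : μ ≪ ν) (hfμ : Integrable f μ) (hfν : Integrable (fun x ↦ exp (f x)) ν)
    (h_int : Integrable (llr μ ν) μ) :
    ∫ x, f x ∂μ ≤ log (∫ x, exp (f x) ∂ν) + ∫ x, llr μ ν x ∂μ := by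
  have : NeZero ν := ⟨fun hν ↦ IsProbabilityMeasure.ne_zero μ <|
    Measure.absolutelyContinuous_zero_iff.mp (hν ▸ hμν)⟩
  have : IsProbabilityMeasure (ν.tilted f) := isProbabilityMeasure_tilted hfν
  have h_gibbs := InformationTheory.integral_llr_add_sub_measure_univ_nonneg
    (hμν.trans (absolutelyContinuous_tilted hfν)) (integrable_llr_tilted_right hμν hfμ h_int hfν)
  rw [integral_llr_tilted_right hμν hfμ hfν h_int] at h_gibbs
  simp only [probReal_univ] at h_gibbs
  linarith

theorem entropy_variational_bound_general {Θ : Type*} [MeasurableSpace Θ]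
    (μ₀ μ₁ : Measure Θ) [IsProbabilityMeasure μ₀] [IsProbabilityMeasure μ₁]
    (hac : μ₁ ≪ μ₀) (h : Θ → ℝ)
    (hexp : Integrable (fun θ => Real.exp (h θ)) μ₀)
    (hint : Integrable h μ₁)
    (hKL : Integrable (fun θ => Real.log ((μ₁.rnDeriv μ₀ θ).toReal)) μ₁) :
    ∫ θ, h θ ∂μ₁ ≤ Real.log (∫ θ, Real.exp (h θ) ∂μ₀)
      + ∫ θ, Real.log ((μ₁.rnDeriv μ₀ θ).toReal) ∂μ₁ :=
  integral_le_log_integral_exp_add_integral_llr hac hint hexp hKL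

/-- Donsker–Varadhan variational principle: `∫ h dμ₁ ≤ ln ∫ e^h dμ₀ + K(μ₁|μ₀)`, where
`K(μ₁|μ₀) = ∫ ln(dμ₁/dμ₀) dμ₁` is the Kullback–Leibler divergence. -/
theorem entropy_variational_bound {Θ : Type*} [MeasurableSpace Θ]
    (μ₀ μ₁ : Measure Θ) [IsProbabilityMeasure μ₀] [IsProbabilityMeasure μ₁]
    (hac : μ₁ ≪ μ₀) (h : Θ → ℝ) (hmeas : Measurable h)
    (hexp : Integrable (fun θ => Real.exp (h θ)) μ₀)
    (hint : Integrable h μ₁)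
    (hKL : Integrable (fun θ => Real.log ((μ₁.rnDeriv μ₀ θ).toReal)) μ₁) :
    ∫ θ, h θ ∂μ₁ ≤ Real.log (∫ θ, Real.exp (h θ) ∂μ₀)
      + ∫ θ, Real.log ((μ₁.rnDeriv μ₀ θ).toReal) ∂μ₁ :=
  entropy_variational_bound_general μ₀ μ₁ hac h hexp hint hKL
end

section
/- Let B be a random positive semidefinite p×p matrix with E[B] = I and √(E[(vᵀBv)²]) ≤ h·|v|₂² for all v ∈ ℝᵖ, where h > 1. For R > 0 define the truncation B^R = min(1, R/tr(B))·B (with B^R = 0 when tr(B) = 0). Then for every unit vector v: (i) ⟨v, B^R v⟩ ≤ ⟨v, B v⟩; (ii) E[⟨v, B^R v⟩] ≥ 1 − h²p/R; and (iii) E[tr(B^R)²] ≤ h²p². -/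
open MeasureTheory Matrix

/-! Write `q = ⟨v, B v⟩` and `T = tr B`, so that `⟨v, B^R v⟩ = min(1, R/T) · q`.
The truncation only loses mass where `T > R`, and there `1 - R/T ≤ T/R`; hence
`E[q] - E[⟨v, B^R v⟩] ≤ E[T q] / R ≤ √E[T²] √E[q²] / R`. Both moments are controlled by the
hypothesis: `E[q²] ≤ h²`, and `T² ≤ p ∑ᵢ Bᵢᵢ²` with `Bᵢᵢ = ⟨eᵢ, B eᵢ⟩` gives `E[T²] ≤ h² p²`,
which is also (iii) since `tr B^R ≤ tr B`. -/

lemma integral_mul_le_sqrt_integral_sq_mul_sqrt {Ω : Type*} [MeasurableSpace Ω] {μ : Measure Ω}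
    {f g : Ω → ℝ} (hf₀ : 0 ≤ᵐ[μ] f) (hg₀ : 0 ≤ᵐ[μ] g) (hf : MemLp f 2 μ) (hg : MemLp g 2 μ) :
    ∫ ω, f ω * g ω ∂μ ≤ √(∫ ω, f ω ^ 2 ∂μ) * √(∫ ω, g ω ^ 2 ∂μ) := by
  have h2 : ENNReal.ofReal 2 = 2 := by norm_num
  have := integral_mul_le_Lp_mul_Lq_of_nonneg Real.HolderConjugate.two_two hf₀ hg₀
    (h2 ▸ hf) (h2 ▸ hg)
  simp only [Real.rpow_two, one_div] at this
  simpa only [Real.sqrt_eq_rpow, one_div] using this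

lemma one_sub_min_one_div_le_div {R t : ℝ} (hR : 0 < R) (ht : 0 < t) :
    1 - min 1 (R / t) ≤ t / R := by
  rcases le_total R t with hRt | htR
  · have : 0 ≤ min 1 (R / t) := le_min zero_le_one (by positivity)
    linarith [(one_le_div hR).2 hRt]
  · rw [min_eq_left ((one_le_div ht).2 htR), sub_self]
    positivity

namespace Matrix

variable {n : Type*} [Fintype n]

lemma dotProduct_mulVec_eq_sum (M : Matrix n n ℝ) (v w : n → ℝ) :
    v ⬝ᵥ M *ᵥ w = ∑ i, ∑ j, v i * M i j * w j := by
  simp [dotProduct, mulVec, Finset.mul_sum, mul_assoc]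

lemma sq_trace_le_card_mul_sum_sq_diag (M : Matrix n n ℝ) :
    M.trace ^ 2 ≤ Fintype.card n * ∑ i, M i i ^ 2 :=
  sq_sum_le_card_mul_sum_sq

/-- The truncation `B^R` of the paper. -/
noncomputable def traceTrunc (R : ℝ) (M : Matrix n n ℝ) : Matrix n n ℝ :=
  min 1 (R / M.trace) • M

/-- Since `R / 0 = 0`, the case `tr M = 0` needs no separate treatment. -/
lemma ite_eq_traceTrunc (R : ℝ) (M : Matrix n n ℝ) :
    (if M.trace = 0 then 0 else min 1 (R / M.trace) • M) = traceTrunc R M := by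
  split_ifs with h <;> simp [traceTrunc, h]

lemma dotProduct_mulVec_traceTrunc (R : ℝ) (M : Matrix n n ℝ) (v : n → ℝ) :
    v ⬝ᵥ traceTrunc R M *ᵥ v = min 1 (R / M.trace) * (v ⬝ᵥ M *ᵥ v) := by
  simp [traceTrunc, smul_mulVec]

namespace PosSemidef

variable {M : Matrix n n ℝ} {R : ℝ}

lemma min_one_div_trace_nonneg (hM : M.PosSemidef) (hR : 0 ≤ R) : 0 ≤ min 1 (R / M.trace) :=
  le_min zero_le_one (div_nonneg hR hM.trace_nonneg)

lemma dotProduct_mulVec_traceTrunc_nonneg (hM : M.PosSemidef) (hR : 0 ≤ R) (v : n → ℝ) :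
    0 ≤ v ⬝ᵥ traceTrunc R M *ᵥ v := by
  rw [dotProduct_mulVec_traceTrunc]
  exact mul_nonneg (hM.min_one_div_trace_nonneg hR) (by simpa using hM.dotProduct_mulVec_nonneg v)

lemma dotProduct_mulVec_traceTrunc_le (hM : M.PosSemidef) (v : n → ℝ) :
    v ⬝ᵥ traceTrunc R M *ᵥ v ≤ v ⬝ᵥ M *ᵥ v := by
  rw [dotProduct_mulVec_traceTrunc]
  exact mul_le_of_le_one_left (by simpa using hM.dotProduct_mulVec_nonneg v) (min_le_left _ _)

lemma sq_trace_traceTrunc_le (hM : M.PosSemidef) (hR : 0 ≤ R) :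
    (traceTrunc R M).trace ^ 2 ≤ M.trace ^ 2 := by
  rw [traceTrunc, trace_smul, smul_eq_mul, mul_pow]
  exact mul_le_of_le_one_left (sq_nonneg _)
    (pow_le_one₀ (hM.min_one_div_trace_nonneg hR) (min_le_left _ _))

lemma dotProduct_mulVec_sub_traceTrunc_le (hM : M.PosSemidef) (hR : 0 < R) (v : n → ℝ) :
    v ⬝ᵥ M *ᵥ v - v ⬝ᵥ traceTrunc R M *ᵥ v ≤ M.trace * (v ⬝ᵥ M *ᵥ v) / R := by
  rw [dotProduct_mulVec_traceTrunc, ← one_sub_mul, mul_div_right_comm]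
  rcases hM.trace_nonneg.eq_or_lt with htr | htr
  · simp [hM.trace_eq_zero_iff.1 htr.symm]
  · exact mul_le_mul_of_nonneg_right (one_sub_min_one_div_le_div hR htr)
      (by simpa using hM.dotProduct_mulVec_nonneg v)

end PosSemidef

end Matrix

section RandomMatrix

variable {Ω n : Type*} [MeasurableSpace Ω] {μ : Measure Ω} [Fintype n] {B : Ω → Matrix n n ℝ}

lemma measurable_dotProduct_mulVec (hB : ∀ i j, Measurable fun ω => B ω i j) (v w : n → ℝ) :
    Measurable fun ω => v ⬝ᵥ B ω *ᵥ w := by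
  simp only [dotProduct_mulVec_eq_sum]
  exact Finset.measurable_sum _ fun i _ => Finset.measurable_sum _ fun j _ =>
    ((hB i j).const_mul (v i)).mul_const (w j)

lemma measurable_trace (hB : ∀ i j, Measurable fun ω => B ω i j) :
    Measurable fun ω => (B ω).trace :=
  Finset.measurable_sum _ fun i _ => hB i i

lemma integrable_dotProduct_mulVec (hB : ∀ i j, Integrable (fun ω => B ω i j) μ)
    (v w : n → ℝ) : Integrable (fun ω => v ⬝ᵥ B ω *ᵥ w) μ := by
  simp only [dotProduct_mulVec_eq_sum]
  exact integrable_finsetSum _ fun i _ => integrable_finsetSum _ fun j _ =>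
    ((hB i j).const_mul (v i)).mul_const (w j)

lemma integral_dotProduct_mulVec (hB : ∀ i j, Integrable (fun ω => B ω i j) μ) (v w : n → ℝ) :
    ∫ ω, v ⬝ᵥ B ω *ᵥ w ∂μ = v ⬝ᵥ (Matrix.of fun i j => ∫ ω, B ω i j ∂μ) *ᵥ w := by
  simp only [dotProduct_mulVec_eq_sum, of_apply]
  rw [integral_finsetSum _ fun i _ => integrable_finsetSum _ fun j _ =>
    ((hB i j).const_mul (v i)).mul_const (w j)]
  refine Finset.sum_congr rfl fun i _ => ?_
  rw [integral_finsetSum _ fun j _ => ((hB i j).const_mul (v i)).mul_const (w j)]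
  simp only [integral_mul_const, integral_const_mul]

lemma memLp_two_dotProduct_mulVec (hB : ∀ i j, Measurable fun ω => B ω i j) {v : n → ℝ}
    (hv : Integrable (fun ω => (v ⬝ᵥ B ω *ᵥ v) ^ 2) μ) : MemLp (fun ω => v ⬝ᵥ B ω *ᵥ v) 2 μ :=
  (memLp_two_iff_integrable_sq (measurable_dotProduct_mulVec hB v v).aestronglyMeasurable).2 hv

lemma integrable_sq_diag
    (hint2 : ∀ v : n → ℝ, Integrable (fun ω => (v ⬝ᵥ B ω *ᵥ v) ^ 2) μ) (i : n) :
    Integrable (fun ω => B ω i i ^ 2) μ := by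
  classical
  simpa using hint2 (Pi.single i 1)

lemma integrable_sq_trace (hB : ∀ i j, Measurable fun ω => B ω i j)
    (hint2 : ∀ v : n → ℝ, Integrable (fun ω => (v ⬝ᵥ B ω *ᵥ v) ^ 2) μ) :
    Integrable (fun ω => (B ω).trace ^ 2) μ := by
  refine ((integrable_finsetSum Finset.univ fun i _ => integrable_sq_diag hint2 i).const_mul
    (Fintype.card n : ℝ)).mono' ((measurable_trace hB).pow_const 2).aestronglyMeasurable
    (Filter.Eventually.of_forall fun ω => ?_)
  simpa using sq_trace_le_card_mul_sum_sq_diag (B ω)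

lemma memLp_two_trace (hB : ∀ i j, Measurable fun ω => B ω i j)
    (hint2 : ∀ v : n → ℝ, Integrable (fun ω => (v ⬝ᵥ B ω *ᵥ v) ^ 2) μ) :
    MemLp (fun ω => (B ω).trace) 2 μ :=
  (memLp_two_iff_integrable_sq (measurable_trace hB).aestronglyMeasurable).2
    (integrable_sq_trace hB hint2)

lemma integral_sq_trace_le (hB : ∀ i j, Measurable fun ω => B ω i j)
    (hint2 : ∀ v : n → ℝ, Integrable (fun ω => (v ⬝ᵥ B ω *ᵥ v) ^ 2) μ) {h : ℝ}
    (hmom : ∀ v : n → ℝ, √(∫ ω, (v ⬝ᵥ B ω *ᵥ v) ^ 2 ∂μ) ≤ h * ∑ j, v j ^ 2) :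
    ∫ ω, (B ω).trace ^ 2 ∂μ ≤ h ^ 2 * Fintype.card n ^ 2 := by
  classical
  have hdiag_le (i : n) : ∫ ω, B ω i i ^ 2 ∂μ ≤ h ^ 2 :=
    (Real.sqrt_le_iff.1 (by simpa [Pi.single_apply] using hmom (Pi.single i 1))).2
  calc ∫ ω, (B ω).trace ^ 2 ∂μ ≤ ∫ ω, Fintype.card n * ∑ i, B ω i i ^ 2 ∂μ :=
        integral_mono (integrable_sq_trace hB hint2)
          ((integrable_finsetSum _ fun i _ => integrable_sq_diag hint2 i).const_mul _)
          fun ω => sq_trace_le_card_mul_sum_sq_diag (B ω)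
    _ = Fintype.card n * ∑ i, ∫ ω, B ω i i ^ 2 ∂μ := by
        rw [integral_const_mul, integral_finsetSum _ fun i _ => integrable_sq_diag hint2 i]
    _ ≤ Fintype.card n * ∑ _i : n, h ^ 2 := by gcongr with i; exact hdiag_le i
    _ = h ^ 2 * Fintype.card n ^ 2 := by simp; ring

lemma integrable_dotProduct_mulVec_traceTrunc (hB : ∀ i j, Measurable fun ω => B ω i j)
    (hpsd : ∀ ω, (B ω).PosSemidef) {R : ℝ} (hR : 0 ≤ R) {v : n → ℝ}
    (hv : Integrable (fun ω => v ⬝ᵥ B ω *ᵥ v) μ) :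
    Integrable (fun ω => v ⬝ᵥ traceTrunc R (B ω) *ᵥ v) μ := by
  refine hv.mono' ?_ (Filter.Eventually.of_forall fun ω => ?_)
  · simp only [dotProduct_mulVec_traceTrunc]
    exact ((measurable_const.min (measurable_const.div (measurable_trace hB))).mul
      (measurable_dotProduct_mulVec hB v v)).aestronglyMeasurable
  · rw [Real.norm_of_nonneg ((hpsd ω).dotProduct_mulVec_traceTrunc_nonneg hR v)]
    exact (hpsd ω).dotProduct_mulVec_traceTrunc_le v

lemma integral_sub_integral_dotProduct_mulVec_traceTrunc_le
    (hB : ∀ i j, Measurable fun ω => B ω i j) (hpsd : ∀ ω, (B ω).PosSemidef)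
    (hintB : ∀ i j, Integrable (fun ω => B ω i j) μ)
    (hint2 : ∀ v : n → ℝ, Integrable (fun ω => (v ⬝ᵥ B ω *ᵥ v) ^ 2) μ) {R : ℝ} (hR : 0 < R)
    (v : n → ℝ) :
    ∫ ω, v ⬝ᵥ B ω *ᵥ v ∂μ - ∫ ω, v ⬝ᵥ traceTrunc R (B ω) *ᵥ v ∂μ ≤
      (∫ ω, (B ω).trace * (v ⬝ᵥ B ω *ᵥ v) ∂μ) / R := by
  have hq := integrable_dotProduct_mulVec hintB v v
  have hqR := integrable_dotProduct_mulVec_traceTrunc hB hpsd hR.le hq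
  have hTq : Integrable (fun ω => (B ω).trace * (v ⬝ᵥ B ω *ᵥ v)) μ :=
    (memLp_two_trace hB hint2).integrable_mul (memLp_two_dotProduct_mulVec hB (hint2 v))
  rw [← integral_sub hq hqR, ← integral_div]
  exact integral_mono (hq.sub hqR) (hTq.div_const R) fun ω =>
    (hpsd ω).dotProduct_mulVec_sub_traceTrunc_le hR v

lemma integral_trace_mul_dotProduct_mulVec_le (hB : ∀ i j, Measurable fun ω => B ω i j)
    (hpsd : ∀ ω, (B ω).PosSemidef)
    (hint2 : ∀ v : n → ℝ, Integrable (fun ω => (v ⬝ᵥ B ω *ᵥ v) ^ 2) μ) {h : ℝ} (hh : 0 ≤ h)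
    (hmom : ∀ v : n → ℝ, √(∫ ω, (v ⬝ᵥ B ω *ᵥ v) ^ 2 ∂μ) ≤ h * ∑ j, v j ^ 2) (v : n → ℝ) :
    ∫ ω, (B ω).trace * (v ⬝ᵥ B ω *ᵥ v) ∂μ ≤ h ^ 2 * Fintype.card n * ∑ j, v j ^ 2 :=
  calc ∫ ω, (B ω).trace * (v ⬝ᵥ B ω *ᵥ v) ∂μ
      ≤ √(∫ ω, (B ω).trace ^ 2 ∂μ) * √(∫ ω, (v ⬝ᵥ B ω *ᵥ v) ^ 2 ∂μ) :=
        integral_mul_le_sqrt_integral_sq_mul_sqrt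
          (Filter.Eventually.of_forall fun ω => (hpsd ω).trace_nonneg)
          (Filter.Eventually.of_forall fun ω => by
            simpa using (hpsd ω).dotProduct_mulVec_nonneg v)
          (memLp_two_trace hB hint2) (memLp_two_dotProduct_mulVec hB (hint2 v))
    _ ≤ (h * Fintype.card n) * (h * ∑ j, v j ^ 2) := by
        gcongr
        · exact Real.sqrt_le_iff.2 ⟨by positivity, by linarith [integral_sq_trace_le hB hint2 hmom]⟩
        · exact hmom v
    _ = h ^ 2 * Fintype.card n * ∑ j, v j ^ 2 := by ring

lemma integral_sq_trace_traceTrunc_le (hB : ∀ i j, Measurable fun ω => B ω i j)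
    (hpsd : ∀ ω, (B ω).PosSemidef)
    (hint2 : ∀ v : n → ℝ, Integrable (fun ω => (v ⬝ᵥ B ω *ᵥ v) ^ 2) μ) {h : ℝ}
    (hmom : ∀ v : n → ℝ, √(∫ ω, (v ⬝ᵥ B ω *ᵥ v) ^ 2 ∂μ) ≤ h * ∑ j, v j ^ 2) {R : ℝ}
    (hR : 0 ≤ R) : ∫ ω, (traceTrunc R (B ω)).trace ^ 2 ∂μ ≤ h ^ 2 * Fintype.card n ^ 2 :=
  (integral_mono_of_nonneg (Filter.Eventually.of_forall fun _ => sq_nonneg _)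
    (integrable_sq_trace hB hint2) (Filter.Eventually.of_forall fun ω =>
      (hpsd ω).sq_trace_traceTrunc_le hR)).trans (integral_sq_trace_le hB hint2 hmom)

end RandomMatrix

theorem truncation_estimates_general {Ω : Type*} [MeasurableSpace Ω]
    (μ : Measure Ω) {p : ℕ}
    (B : Ω → Matrix (Fin p) (Fin p) ℝ)
    (hmeas : ∀ i j, Measurable (fun ω => B ω i j))
    (hpsd : ∀ ω, (B ω).PosSemidef)
    (hintB : ∀ i j, Integrable (fun ω => B ω i j) μ)
    (hmean : ∀ i j, ∫ ω, B ω i j ∂μ = (1 : Matrix (Fin p) (Fin p) ℝ) i j)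
    (h : ℝ)
    (hint2 : ∀ v : Fin p → ℝ, Integrable (fun ω => (v ⬝ᵥ (B ω).mulVec v) ^ 2) μ)
    (hmom : ∀ v : Fin p → ℝ,
      Real.sqrt (∫ ω, (v ⬝ᵥ (B ω).mulVec v) ^ 2 ∂μ) ≤ h * ∑ j, (v j) ^ 2)
    (R : ℝ) (hR : 0 < R)
    (BR : Ω → Matrix (Fin p) (Fin p) ℝ)
    (hBR : ∀ ω, BR ω = if (B ω).trace = 0 then 0
      else (min 1 (R / (B ω).trace)) • B ω) :
    ∀ v : Fin p → ℝ, (∑ j, (v j) ^ 2 = 1) →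
      (∀ ω, v ⬝ᵥ (BR ω).mulVec v ≤ v ⬝ᵥ (B ω).mulVec v) ∧
      (∫ ω, v ⬝ᵥ (BR ω).mulVec v ∂μ ≥ 1 - h ^ 2 * p / R) ∧
      (∫ ω, ((BR ω).trace) ^ 2 ∂μ ≤ h ^ 2 * (p : ℝ) ^ 2) := by
  intro v hv
  obtain rfl : BR = fun ω => traceTrunc R (B ω) :=
    funext fun ω => (hBR ω).trans (ite_eq_traceTrunc R (B ω))
  have hh : 0 ≤ h := (Real.sqrt_nonneg _).trans (by simpa [hv] using hmom v)
  have hq_mean : ∫ ω, v ⬝ᵥ B ω *ᵥ v ∂μ = 1 := by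
    rw [integral_dotProduct_mulVec hintB,
      show (Matrix.of fun i j => ∫ ω, B ω i j ∂μ) = 1 from Matrix.ext hmean, one_mulVec, ← hv]
    simp [dotProduct, sq]
  refine ⟨fun ω => (hpsd ω).dotProduct_mulVec_traceTrunc_le v, ?_, ?_⟩
  · calc ∫ ω, v ⬝ᵥ traceTrunc R (B ω) *ᵥ v ∂μ
        ≥ 1 - (∫ ω, (B ω).trace * (v ⬝ᵥ B ω *ᵥ v) ∂μ) / R := by
          linarith [integral_sub_integral_dotProduct_mulVec_traceTrunc_le
            hmeas hpsd hintB hint2 hR v]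
      _ ≥ 1 - h ^ 2 * p / R := by
          gcongr
          simpa [hv] using integral_trace_mul_dotProduct_mulVec_le hmeas hpsd hint2 hh hmom v
  · simpa using integral_sq_trace_traceTrunc_le hmeas hpsd hint2 hmom hR.le

/-- Estimates for the truncation `B^R = min(1, R/tr B) • B` of a random positive
semidefinite matrix `B` with identity mean and `√E[(vᵀBv)²] ≤ h |v|₂²`. -/
theorem truncation_estimates {Ω : Type*} [MeasurableSpace Ω]
    (μ : Measure Ω) [IsProbabilityMeasure μ] {p : ℕ}
    (B : Ω → Matrix (Fin p) (Fin p) ℝ)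
    (hmeas : ∀ i j, Measurable (fun ω => B ω i j))
    (hpsd : ∀ ω, (B ω).PosSemidef)
    (hintB : ∀ i j, Integrable (fun ω => B ω i j) μ)
    (hmean : ∀ i j, ∫ ω, B ω i j ∂μ = (1 : Matrix (Fin p) (Fin p) ℝ) i j)
    (h : ℝ) (hh : 1 < h)
    (hint2 : ∀ v : Fin p → ℝ, Integrable (fun ω => (v ⬝ᵥ (B ω).mulVec v) ^ 2) μ)
    (hmom : ∀ v : Fin p → ℝ,
      Real.sqrt (∫ ω, (v ⬝ᵥ (B ω).mulVec v) ^ 2 ∂μ) ≤ h * ∑ j, (v j) ^ 2)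
    (R : ℝ) (hR : 0 < R)
    (BR : Ω → Matrix (Fin p) (Fin p) ℝ)
    (hBR : ∀ ω, BR ω = if (B ω).trace = 0 then 0
      else (min 1 (R / (B ω).trace)) • B ω) :
    ∀ v : Fin p → ℝ, (∑ j, (v j) ^ 2 = 1) →
      (∀ ω, v ⬝ᵥ (BR ω).mulVec v ≤ v ⬝ᵥ (B ω).mulVec v) ∧
      (∫ ω, v ⬝ᵥ (BR ω).mulVec v ∂μ ≥ 1 - h ^ 2 * p / R) ∧
      (∫ ω, ((BR ω).trace) ^ 2 ∂μ ≤ h ^ 2 * (p : ℝ) ^ 2) :=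
  truncation_estimates_general μ B hmeas hpsd hintB hmean h hint2 hmom R hR BR hBR
end
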